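/- arXiv:2505.03104 — 10 statements merged into one kernel-verified Lean document; each statement's English description precedes it below -/
import Mathlib

section
/- For every β ∈ (0, 1/2] and every c > 0 there exists a constant C > 0 (depending on β, c, η₁, θ) such that: whenever the step-size assumption holds with η₁ < 1 and θ < c e^{−c}/β, one has ∑_{k=1}^{n} η_k^{1+β} e^{−c(t_n − t_k)} ≤ C η_n^{β} for every n ≥ 1. -/
open Real Filter

private lemma key_ineq (β c θ C x : ℝ) (hβ0 : 0 < β) (hc : 0 < c) (hθ : 0 < θ)
    (hβθ : β * θ < c) (hx0 : 0 < x) (hx1 : x < 1)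
    (hC : (1 + c) / (c - β * θ) ≤ C) :
    C * (Real.exp (-(c * x)) * (1 + β * (θ * x))) + x ≤ C := by
  have hcx : 0 < c * x := mul_pos hc hx0
  have h1 : c * x + 1 ≤ Real.exp (c * x) := Real.add_one_le_exp _
  have hE : 0 < Real.exp (-(c * x)) := Real.exp_pos _
  have h2 : Real.exp (-(c * x)) * Real.exp (c * x) = 1 := by
    rw [← Real.exp_add]; simp
  have hEle : Real.exp (-(c * x)) * (1 + c * x) ≤ 1 := by nlinarith
  have hd : 0 < c - β * θ := by linarith
  have hC' : 1 + c ≤ C * (c - β * θ) := by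
    rw [div_le_iff₀ hd] at hC; linarith
  have hCpos : 0 < C := by
    have : 0 < (1 + c) / (c - β * θ) := by positivity
    linarith
  have h0 : (0:ℝ) < 1 + c * x := by linarith
  have hE2 : Real.exp (-(c * x)) ≤ (1 + c * x)⁻¹ := by
    rw [← one_div]; exact (le_div_iff₀ h0).mpr hEle
  have hβθx : (0:ℝ) < 1 + β * (θ * x) := by positivity
  have step : C * (Real.exp (-(c * x)) * (1 + β * (θ * x)))
      ≤ C * ((1 + c * x)⁻¹ * (1 + β * (θ * x))) := by
    gcongr
  have final : C * ((1 + c * x)⁻¹ * (1 + β * (θ * x))) + x ≤ C := by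
    rw [← sub_nonneg]
    have key : C - (C * ((1 + c * x)⁻¹ * (1 + β * (θ * x))) + x)
        = (C * x * (c - β * θ) - x * (1 + c * x)) / (1 + c * x) := by
      field_simp; ring
    rw [key]
    apply div_nonneg _ h0.le
    nlinarith [mul_le_mul_of_nonneg_left hC' hx0.le]
  linarith

theorem stmt2 (β c θ η₁ : ℝ) (hβ0 : 0 < β) (hβ : β ≤ 1 / 2) (hc : 0 < c) (hθ : 0 < θ) :
    ∃ C > 0, ∀ η : ℕ → ℝ,
      η 1 = η₁ →
      (∀ n, 1 ≤ n → 0 < η n) →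
      (∀ n, 1 ≤ n → η (n + 1) ≤ η n) →
      Tendsto η atTop (nhds 0) →
      Tendsto (fun n => ∑ k ∈ Finset.Icc 1 n, η k) atTop atTop →
      (∀ n, 2 ≤ n → η (n - 1) - η n ≤ θ * η n ^ 2) →
      η 1 < 1 → θ < c * Real.exp (-c) / β →
      ∀ n, 1 ≤ n →
        ∑ k ∈ Finset.Icc 1 n, η k ^ (1 + β) *
            Real.exp (-c * ((∑ j ∈ Finset.Icc 1 n, η j) - ∑ j ∈ Finset.Icc 1 k, η j))
          ≤ C * η n ^ β := by
  set C := max 1 ((1 + c) / (c - β * θ)) with hCdef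
  have hC1 : (1:ℝ) ≤ C := le_max_left _ _
  have hCpos : (0:ℝ) < C := lt_of_lt_of_le one_pos hC1
  refine ⟨C, hCpos, ?_⟩
  intro η hη1 hpos hmono _ _ hdec hη1lt hθc n hn
  have hβ1 : β ≤ 1 := by linarith
  have hβθ : β * θ < c := by
    rw [lt_div_iff₀ hβ0] at hθc
    have hexple : Real.exp (-c) ≤ 1 := by
      rw [← Real.exp_zero]
      exact Real.exp_le_exp.mpr (by linarith)
    nlinarith [mul_le_mul_of_nonneg_left hexple hc.le]
  have hCge : (1 + c) / (c - β * θ) ≤ C := le_max_right _ _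
  have hle1 : ∀ n, 1 ≤ n → η n ≤ η 1 := by
    intro n hn
    induction n, hn using Nat.le_induction with
    | base => exact le_rfl
    | succ m hm ih => exact (hmono m hm).trans ih
  induction n, hn using Nat.le_induction with
  | base =>
    have hx0 : 0 < η 1 := hpos 1 le_rfl
    simp only [Finset.Icc_self, Finset.sum_singleton, sub_self, mul_zero, Real.exp_zero, mul_one]
    rw [Real.rpow_add hx0, Real.rpow_one]
    have : 0 ≤ η 1 ^ β := Real.rpow_nonneg hx0.le β
    have h1C : η 1 ≤ C := le_trans hη1lt.le hC1
    exact mul_le_mul_of_nonneg_right h1C this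
  | succ m hm ih =>
    have hx0 : 0 < η (m + 1) := hpos _ (by omega)
    have hx1 : η (m + 1) < 1 := lt_of_le_of_lt (hle1 (m + 1) (by omega)) hη1lt
    have hm0 : 0 < η m := hpos m hm
    have hsplit : ∑ k ∈ Finset.Icc 1 (m + 1), η k ^ (1 + β) *
          Real.exp (-c * ((∑ j ∈ Finset.Icc 1 (m + 1), η j) - ∑ j ∈ Finset.Icc 1 k, η j))
        = Real.exp (-(c * η (m + 1))) * (∑ k ∈ Finset.Icc 1 m, η k ^ (1 + β) *
            Real.exp (-c * ((∑ j ∈ Finset.Icc 1 m, η j) - ∑ j ∈ Finset.Icc 1 k, η j)))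
          + η (m + 1) ^ (1 + β) := by
      rw [Finset.sum_Icc_succ_top (by omega : 1 ≤ m + 1), Finset.mul_sum]
      congr 1
      · apply Finset.sum_congr rfl
        intro k hk
        rw [Finset.sum_Icc_succ_top (by omega : 1 ≤ m + 1)]
        rw [show -c * (((∑ j ∈ Finset.Icc 1 m, η j) + η (m + 1)) - ∑ j ∈ Finset.Icc 1 k, η j)
            = -(c * η (m + 1)) + -c * ((∑ j ∈ Finset.Icc 1 m, η j) - ∑ j ∈ Finset.Icc 1 k, η j)
            from by ring, Real.exp_add]
        ring
      · simp
    rw [hsplit]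
    have hd2 := hdec (m + 1) (by omega)
    rw [Nat.add_sub_cancel] at hd2
    have hdm : η m ≤ η (m + 1) * (1 + θ * η (m + 1)) := by nlinarith
    have hmb : η m ^ β ≤ η (m + 1) ^ β * (1 + β * (θ * η (m + 1))) := by
      calc η m ^ β ≤ (η (m + 1) * (1 + θ * η (m + 1))) ^ β :=
            Real.rpow_le_rpow hm0.le hdm hβ0.le
        _ = η (m + 1) ^ β * (1 + θ * η (m + 1)) ^ β :=
            Real.mul_rpow hx0.le (by positivity)
        _ ≤ η (m + 1) ^ β * (1 + β * (θ * η (m + 1))) := by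
            have hber := rpow_one_add_le_one_add_mul_self
              (s := θ * η (m + 1)) (by nlinarith [mul_pos hθ hx0]) hβ0.le hβ1
            exact mul_le_mul_of_nonneg_left hber (Real.rpow_nonneg hx0.le β)
    have hE : 0 < Real.exp (-(c * η (m + 1))) := Real.exp_pos _
    have hxb : 0 ≤ η (m + 1) ^ β := Real.rpow_nonneg hx0.le β
    calc Real.exp (-(c * η (m + 1))) * (∑ k ∈ Finset.Icc 1 m, η k ^ (1 + β) *
            Real.exp (-c * ((∑ j ∈ Finset.Icc 1 m, η j) - ∑ j ∈ Finset.Icc 1 k, η j)))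
          + η (m + 1) ^ (1 + β)
        ≤ Real.exp (-(c * η (m + 1))) * (C * η m ^ β) + η (m + 1) ^ (1 + β) := by
          gcongr
      _ ≤ Real.exp (-(c * η (m + 1))) * (C * (η (m + 1) ^ β * (1 + β * (θ * η (m + 1)))))
            + η (m + 1) * η (m + 1) ^ β := by
          rw [Real.rpow_add hx0, Real.rpow_one]
          gcongr
      _ = (C * (Real.exp (-(c * η (m + 1))) * (1 + β * (θ * η (m + 1)))) + η (m + 1))
            * η (m + 1) ^ β := by ring
      _ ≤ C * η (m + 1) ^ β :=
          mul_le_mul_of_nonneg_right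
            (key_ineq β c θ C (η (m + 1)) hβ0 hc hθ hβθ hx0 hx1 hCge) hxb
end

section
/- For every β ∈ (0, 1/2] and every c > 0 there exists a constant C > 0 (depending on β, c, η₁, θ) such that: whenever the step-size assumption holds with η₁ < 1 and θ < c e^{−c}/β, one has ∑_{k=K_n}^{n−1} η_k^{1+β}/√(t_n − t_k) ≤ C η_n^{β} for every n ≥ 2, where K_n := min{ k ≥ 1 : t_n − t_k ≤ 1 }. -/
/-!
Write `t` for the partial sums of `η`. Since `η (m - 1) ≤ η m (1 + θ η m) ≤ exp (θ η m) η m`, iterating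
gives `η k ≤ exp (θ (t n - t k)) η n`, so on the window `t n - t k ≤ 1` every `η k` is at most `e^θ η n`
and `η k ^ (1 + β) ≤ e^{θβ} η n ^ β · η k`. The remaining sum `∑ η k / √(t n - t k)` is a Riemann sum
for `∫ dx / √x`: each term is bounded by a constant times `√(t n - t (k - 1)) - √(t n - t k)`, and these
telescope to at most `√(t n - t (K n - 1)) ≤ √2`.
-/

open Real Filter

theorem le_exp_mul_of_sub_le_mul_sq {a b θ : ℝ} (hb : 0 ≤ b) (h : a - b ≤ θ * b ^ 2) :
    a ≤ exp (θ * b) * b := by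
  nlinarith [add_one_le_exp (θ * b)]

theorem div_sqrt_le_mul_sqrt_add_sub {a e L : ℝ} (ha : 0 < a) (he : 0 ≤ e) (heL : e ≤ L * a) :
    e / √a ≤ 2 * √(1 + L) * (√(a + e) - √a) := by
  have hsa : 0 < √a := sqrt_pos.2 ha
  have hle : √a ≤ √(a + e) := sqrt_le_sqrt (by linarith)
  have hsqrt : √(a + e) ≤ √(1 + L) * √a := by
    rw [← sqrt_mul (by nlinarith)]
    exact sqrt_le_sqrt (by linarith)
  have hdiff : (√(a + e) - √a) * (√(a + e) + √a) = e := by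
    nlinarith [sq_sqrt ha.le, sq_sqrt (show 0 ≤ a + e by linarith)]
  rw [div_le_iff₀ hsa]
  calc e = (√(a + e) - √a) * (√(a + e) + √a) := hdiff.symm
    _ ≤ (√(a + e) - √a) * (2 * √(1 + L) * √a) := by
      gcongr
      linarith
    _ = 2 * √(1 + L) * (√(a + e) - √a) * √a := by ring

section StepSize

variable {η t : ℕ → ℝ} {θ β : ℝ}

theorem stepSize_le_exp_mul (ht : ∀ m, t (m + 1) = t m + η (m + 1))
    (hpos : ∀ m, 1 ≤ m → 0 < η m)
    (hstep : ∀ m, 1 ≤ m → η m - η (m + 1) ≤ θ * η (m + 1) ^ 2)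
    {k : ℕ} (hk : 1 ≤ k) {m : ℕ} (hkm : k ≤ m) :
    η k ≤ exp (θ * (t m - t k)) * η m := by
  induction m, hkm using Nat.le_induction with
  | base => simp
  | succ m hkm ih =>
    have hm := le_exp_mul_of_sub_le_mul_sq (hpos (m + 1) (by omega)).le (hstep m (by omega))
    calc η k ≤ exp (θ * (t m - t k)) * η m := ih
      _ ≤ exp (θ * (t m - t k)) * (exp (θ * η (m + 1)) * η (m + 1)) := by gcongr
      _ = exp (θ * (t (m + 1) - t k)) * η (m + 1) := by
        rw [ht, ← mul_assoc, ← exp_add]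
        ring_nf

theorem stepSize_rpow_div_sqrt_le (hβ : 0 ≤ β) (hθ : 0 ≤ θ)
    (ht : ∀ m, t (m + 1) = t m + η (m + 1))
    (hpos : ∀ m, 1 ≤ m → 0 < η m)
    (hstep : ∀ m, 1 ≤ m → η m - η (m + 1) ≤ θ * η (m + 1) ^ 2)
    {k n : ℕ} (hk : 1 ≤ k) (hkn : k < n) (hwin : t n - t k ≤ 1) :
    η k ^ (1 + β) / √(t n - t k) ≤
      exp (θ * β) * η n ^ β * (2 * √(1 + exp θ)) * (√(t n - t (k - 1)) - √(t n - t k)) := by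
  have htmono : StrictMono t :=
    strictMono_nat_of_lt_succ fun m => by linarith [ht m, hpos (m + 1) (by omega)]
  have hηk := hpos k hk
  have hηn := hpos n (by omega)
  have hηn_le : η n ≤ t n - t k := by
    obtain ⟨m, rfl⟩ : ∃ m, n = m + 1 := ⟨n - 1, by omega⟩
    linarith [ht m, htmono.monotone (show k ≤ m by omega)]
  have hηk_le : η k ≤ exp θ * η n :=
    calc η k ≤ exp (θ * (t n - t k)) * η n := stepSize_le_exp_mul ht hpos hstep hk hkn.le
      _ ≤ exp θ * η n := by gcongr; nlinarith
  have hrpow : η k ^ β ≤ exp (θ * β) * η n ^ β :=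
    calc η k ^ β ≤ (exp θ * η n) ^ β := by gcongr
      _ = exp (θ * β) * η n ^ β := by rw [mul_rpow (exp_pos θ).le hηn.le, exp_mul]
  have hprev : t n - t (k - 1) = (t n - t k) + η k := by
    obtain ⟨j, rfl⟩ : ∃ j, k = j + 1 := ⟨k - 1, by omega⟩
    rw [Nat.add_sub_cancel, ht]
    ring
  have hriemann := div_sqrt_le_mul_sqrt_add_sub (sub_pos.2 (htmono hkn)) hηk.le
    (show η k ≤ exp θ * (t n - t k) by nlinarith [exp_pos θ])
  rw [add_comm, rpow_add hηk, rpow_one, mul_div_assoc, hprev, mul_assoc _ (2 * _)]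
  exact mul_le_mul hrpow hriemann (by positivity) (by positivity)

theorem stepSize_sum_rpow_div_sqrt_le (hβ : 0 ≤ β) (hθ : 0 ≤ θ)
    (ht : ∀ m, t (m + 1) = t m + η (m + 1))
    (hpos : ∀ m, 1 ≤ m → 0 < η m)
    (hstep : ∀ m, 1 ≤ m → η m - η (m + 1) ≤ θ * η (m + 1) ^ 2)
    {K n : ℕ} (hK : 1 ≤ K) (hKn : K ≤ n) (hwin : t n - t K ≤ 1) (hηK : η K ≤ 1) :
    ∑ k ∈ Finset.Ico K n, η k ^ (1 + β) / √(t n - t k) ≤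
      exp (θ * β) * (2 * √(1 + exp θ)) * √2 * η n ^ β := by
  have htmono : Monotone t :=
    monotone_nat_of_le_succ fun m => by linarith [ht m, hpos (m + 1) (by omega)]
  set D := exp (θ * β) * η n ^ β * (2 * √(1 + exp θ))
  set g : ℕ → ℝ := fun k => -√(t n - t (k - 1))
  have hterm : ∀ k ∈ Finset.Ico K n, η k ^ (1 + β) / √(t n - t k) ≤ D * (g (k + 1) - g k) := by
    intro k hk
    obtain ⟨hKk, hkn⟩ := Finset.mem_Ico.1 hk
    have := stepSize_rpow_div_sqrt_le hβ hθ ht hpos hstep (hK.trans hKk) hkn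
      (by linarith [htmono hKk])
    simpa [g, sub_eq_add_neg, add_comm] using this
  have hgK : √(t n - t (K - 1)) ≤ √2 := by
    obtain ⟨j, rfl⟩ : ∃ j, K = j + 1 := ⟨K - 1, by omega⟩
    rw [Nat.add_sub_cancel]
    exact sqrt_le_sqrt (by linarith [ht j])
  calc ∑ k ∈ Finset.Ico K n, η k ^ (1 + β) / √(t n - t k)
      ≤ D * ∑ k ∈ Finset.Ico K n, (g (k + 1) - g k) := by
        rw [Finset.mul_sum]
        exact Finset.sum_le_sum hterm
    _ = D * (√(t n - t (K - 1)) - √(t n - t (n - 1))) := by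
        rw [Finset.sum_Ico_sub g hKn]
        ring
    _ ≤ D * √2 := by
        have : 0 ≤ √(t n - t (n - 1)) := sqrt_nonneg _
        have : 0 ≤ D := by have := hpos n (by omega); positivity
        gcongr
        linarith
    _ = exp (θ * β) * (2 * √(1 + exp θ)) * √2 * η n ^ β := by ring

end StepSize

theorem stmt3_general (β c θ η₁ : ℝ) (hβ0 : 0 < β) (hθ : 0 < θ) :
    ∃ C > 0, ∀ η : ℕ → ℝ,
      η 1 = η₁ →
      (∀ n, 1 ≤ n → 0 < η n) →
      (∀ n, 1 ≤ n → η (n + 1) ≤ η n) →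
      Tendsto η atTop (nhds 0) →
      Tendsto (fun n => ∑ k ∈ Finset.Icc 1 n, η k) atTop atTop →
      (∀ n, 2 ≤ n → η (n - 1) - η n ≤ θ * η n ^ 2) →
      η 1 < 1 → θ < c * Real.exp (-c) / β →
      ∀ n, 2 ≤ n →
        -- `t m` denotes the partial sum `∑_{j=1}^m η_j`; `K n` is the first index `k ≥ 1`
        -- with `t n - t k ≤ 1`.
        (fun t : ℕ → ℝ =>
          ∑ k ∈ Finset.Ico (sInf {k : ℕ | 1 ≤ k ∧ t n - t k ≤ 1}) n,
              η k ^ (1 + β) / Real.sqrt (t n - t k))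
          (fun m => ∑ j ∈ Finset.Icc 1 m, η j)
          ≤ C * η n ^ β := by
  refine ⟨exp (θ * β) * (2 * √(1 + exp θ)) * √2, by positivity, ?_⟩
  intro η _ hpos hdec _ _ hstep hη1 _ n hn
  set t : ℕ → ℝ := fun m => ∑ j ∈ Finset.Icc 1 m, η j
  have ht : ∀ m, t (m + 1) = t m + η (m + 1) := fun m => Finset.sum_Icc_succ_top (by omega) η
  have hstep' : ∀ m, 1 ≤ m → η m - η (m + 1) ≤ θ * η (m + 1) ^ 2 := fun m hm => by
    simpa using hstep (m + 1) (by omega)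
  have hn_mem : n ∈ {k : ℕ | 1 ≤ k ∧ t n - t k ≤ 1} := ⟨by omega, by simp⟩
  obtain ⟨hK, hwin⟩ := Nat.sInf_mem ⟨n, hn_mem⟩
  have hηK : η (sInf {k : ℕ | 1 ≤ k ∧ t n - t k ≤ 1}) ≤ η 1 :=
    antitoneOn_nat_Ici_of_succ_le hdec (Set.mem_Ici.2 le_rfl) (Set.mem_Ici.2 hK) hK
  exact stepSize_sum_rpow_div_sqrt_le hβ0.le hθ.le ht hpos hstep' hK (Nat.sInf_le hn_mem) hwin
    (by linarith)

theorem stmt3 (β c θ η₁ : ℝ) (hβ0 : 0 < β) (hβ : β ≤ 1 / 2) (hc : 0 < c) (hθ : 0 < θ) :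
    ∃ C > 0, ∀ η : ℕ → ℝ,
      η 1 = η₁ →
      (∀ n, 1 ≤ n → 0 < η n) →
      (∀ n, 1 ≤ n → η (n + 1) ≤ η n) →
      Tendsto η atTop (nhds 0) →
      Tendsto (fun n => ∑ k ∈ Finset.Icc 1 n, η k) atTop atTop →
      (∀ n, 2 ≤ n → η (n - 1) - η n ≤ θ * η n ^ 2) →
      η 1 < 1 → θ < c * Real.exp (-c) / β →
      ∀ n, 2 ≤ n →
        -- `t m` denotes the partial sum `∑_{j=1}^m η_j`; `K n` is the first index `k ≥ 1`
        -- with `t n - t k ≤ 1`.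
        (fun t : ℕ → ℝ =>
          ∑ k ∈ Finset.Ico (sInf {k : ℕ | 1 ≤ k ∧ t n - t k ≤ 1}) n,
              η k ^ (1 + β) / Real.sqrt (t n - t k))
          (fun m => ∑ j ∈ Finset.Icc 1 m, η j)
          ≤ C * η n ^ β :=
  stmt3_general β c θ η₁ hβ0 hθ
end

section
/- For every β ∈ (0, 1/2] and every c > 0 there exists a constant C > 0 (depending on β, c, η₁, θ) such that: whenever the step-size assumption holds with η₁ < 1 and θ < c e^{−c}/β, one has ∑_{k=K_n}^{n−1} η_k^{1+β}/(t_n − t_k) ≤ C η_n^{β} |ln η_n| for every n ≥ 2, where K_n := min{ k ≥ 1 : t_n − t_k ≤ 1 }. -/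
open Real Filter

set_option maxHeartbeats 1600000 in
theorem stmt4 (β c θ η₁ : ℝ) (hβ0 : 0 < β) (hβ : β ≤ 1 / 2) (hc : 0 < c) (hθ : 0 < θ) :
    ∃ C > 0, ∀ η : ℕ → ℝ,
      η 1 = η₁ →
      (∀ n, 1 ≤ n → 0 < η n) →
      (∀ n, 1 ≤ n → η (n + 1) ≤ η n) →
      Tendsto η atTop (nhds 0) →
      Tendsto (fun n => ∑ k ∈ Finset.Icc 1 n, η k) atTop atTop →
      (∀ n, 2 ≤ n → η (n - 1) - η n ≤ θ * η n ^ 2) →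
      η 1 < 1 → θ < c * Real.exp (-c) / β →
      ∀ n, 2 ≤ n →
        -- `t m` denotes the partial sum `∑_{j=1}^m η_j`; `K n` is the first index `k ≥ 1`
        -- with `t n - t k ≤ 1`.
        (fun t : ℕ → ℝ =>
          ∑ k ∈ Finset.Ico (sInf {k : ℕ | 1 ≤ k ∧ t n - t k ≤ 1}) n,
              η k ^ (1 + β) / (t n - t k))
          (fun m => ∑ j ∈ Finset.Icc 1 m, η j)
          ≤ C * η n ^ β * |Real.log (η n)| := by
  obtain ⟨L, hLpos, hLspec⟩ : ∃ L : ℝ, 0 < L ∧ ((η₁ < 1 ∧ 0 < η₁) → L = -Real.log η₁) := by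
    by_cases h : η₁ < 1 ∧ 0 < η₁
    · exact ⟨-Real.log η₁, neg_pos.mpr (Real.log_neg h.2 h.1), fun _ => rfl⟩
    · exact ⟨1, one_pos, fun h' => absurd h' h⟩
  have hLinv : (0:ℝ) < 1 / L := one_div_pos.mpr hLpos
  have hCpos : 0 < Real.exp θ * (1 + θ) * (1 + 1 / L) :=
    mul_pos (mul_pos (Real.exp_pos θ) (by linarith)) (by linarith)
  refine ⟨Real.exp θ * (1 + θ) * (1 + 1 / L), hCpos, ?_⟩
  intro η hη1 hpos hmono htend1 htend2 hstep hη1lt hθc n hn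
  simp only []
  set t : ℕ → ℝ := fun m => ∑ j ∈ Finset.Icc 1 m, η j with htdef
  -- basic facts about t
  have tsub : ∀ a b : ℕ, a ≤ b → t b - t a = ∑ j ∈ Finset.Ioc a b, η j := by
    intro a b hab
    have h1 : ∀ m : ℕ, t m = ∑ j ∈ Finset.Ioc 0 m, η j := by
      intro m; rw [htdef]; simp [← Finset.Icc_add_one_left_eq_Ioc]
    have h2 := Finset.sum_Ioc_consecutive η (Nat.zero_le a) hab
    rw [h1, h1, ← h2]; ring
  have tmono : ∀ a b : ℕ, a ≤ b → t a ≤ t b := by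
    intro a b hab
    have := tsub a b hab
    have hnn : (0:ℝ) ≤ ∑ j ∈ Finset.Ioc a b, η j := by
      apply Finset.sum_nonneg
      intro j hj
      exact le_of_lt (hpos j (by simp only [Finset.mem_Ioc] at hj; omega))
    linarith
  have tlt : ∀ a b : ℕ, a < b → 0 < t b - t a := by
    intro a b hab
    rw [tsub a b (le_of_lt hab)]
    apply Finset.sum_pos
    · intro j hj
      exact hpos j (by simp only [Finset.mem_Ioc] at hj; omega)
    · exact Finset.nonempty_Ioc.mpr hab
  -- the index K
  set K : ℕ := sInf {k : ℕ | 1 ≤ k ∧ t n - t k ≤ 1} with hKdef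
  have hnmem : n ∈ {k : ℕ | 1 ≤ k ∧ t n - t k ≤ 1} := by
    constructor
    · omega
    · simp
  have hKmem : K ∈ {k : ℕ | 1 ≤ k ∧ t n - t k ≤ 1} := Nat.sInf_mem ⟨n, hnmem⟩
  have hK1 : 1 ≤ K := hKmem.1
  have hKle : t n - t K ≤ 1 := hKmem.2
  have hKn : K ≤ n := Nat.sInf_le hnmem
  -- monotonicity of η
  have hmono' : ∀ a b : ℕ, 1 ≤ a → a ≤ b → η b ≤ η a := by
    intro a b ha hab
    induction b, hab using Nat.le_induction with
    | base => exact le_rfl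
    | succ m hm ih => exact le_trans (hmono m (by omega)) ih
  have hub : ∀ k : ℕ, 1 ≤ k → η k < 1 := fun k hk =>
    lt_of_le_of_lt (hmono' 1 k le_rfl hk) hη1lt
  -- step condition: η k ≤ η (k+1) * (1 + θ * η (k+1))
  have hstep' : ∀ k : ℕ, 1 ≤ k → η k ≤ η (k + 1) * (1 + θ * η (k + 1)) := by
    intro k hk
    have h := hstep (k + 1) (by omega)
    simp only [Nat.add_sub_cancel] at h
    nlinarith [hpos (k+1) (by omega)]
  have hratio : ∀ k : ℕ, 1 ≤ k → η k ≤ (1 + θ) * η (k + 1) := by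
    intro k hk
    have h := hstep' k hk
    have h1 := hpos (k+1) (by omega)
    have h2 := hub (k+1) (by omega)
    nlinarith [mul_pos hθ (mul_pos h1 (sub_pos.mpr h2))]
  -- exponential comparison on the window
  have hexp : ∀ m k : ℕ, 1 ≤ k → k + m ≤ n →
      η k ≤ η (k + m) * Real.exp (θ * ∑ j ∈ Finset.Ioc k (k + m), η j) := by
    intro m
    induction m with
    | zero => intro k hk _; simp
    | succ m ih =>
      intro k hk hkm
      have h1 : η k ≤ η (k + 1) * Real.exp (θ * η (k + 1)) := by
        have h := hstep' k hk
        have h2 : 1 + θ * η (k + 1) ≤ Real.exp (θ * η (k + 1)) := by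
          have := Real.add_one_le_exp (θ * η (k + 1)); linarith
        have h3 := hpos (k+1) (by omega)
        nlinarith
      have h4 := ih (k + 1) (by omega) (by omega)
      have hsum : η (k + 1) + ∑ j ∈ Finset.Ioc (k + 1) (k + 1 + m), η j
          = ∑ j ∈ Finset.Ioc k (k + (m + 1)), η j := by
        have h5 := Finset.sum_Ioc_consecutive η (Nat.le_succ k)
          (show k + 1 ≤ k + 1 + m by omega)
        have h6 : ∑ j ∈ Finset.Ioc k (k + 1), η j = η (k + 1) := by
          rw [Finset.sum_Ioc_succ_top (le_refl k), Finset.Ioc_self]; simp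
        rw [show k + (m + 1) = k + 1 + m by omega, ← h5, h6]
      have h7 : η (k + 1 + m) = η (k + (m + 1)) := by ring_nf
      calc η k ≤ η (k + 1) * Real.exp (θ * η (k + 1)) := h1
        _ ≤ (η (k + 1 + m) * Real.exp (θ * ∑ j ∈ Finset.Ioc (k + 1) (k + 1 + m), η j))
              * Real.exp (θ * η (k + 1)) := by
            apply mul_le_mul_of_nonneg_right h4 (le_of_lt (Real.exp_pos _))
        _ = η (k + (m + 1)) * Real.exp (θ * ∑ j ∈ Finset.Ioc k (k + (m + 1)), η j) := by
            rw [h7, mul_assoc, ← Real.exp_add, ← hsum]; ring_nf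
  have hwin : ∀ k : ℕ, K ≤ k → k ≤ n → η k ≤ η n * Real.exp θ := by
    intro k hKk hkn
    have h1 := hexp (n - k) k (le_trans hK1 hKk) (by omega)
    rw [show k + (n - k) = n by omega] at h1
    have h2 : ∑ j ∈ Finset.Ioc k n, η j = t n - t k := (tsub k n hkn).symm
    have h3 : t n - t k ≤ 1 := by
      have := tmono K k hKk; linarith
    have h4 : Real.exp (θ * ∑ j ∈ Finset.Ioc k n, η j) ≤ Real.exp θ := by
      apply Real.exp_le_exp.mpr
      rw [h2]
      nlinarith
    calc η k ≤ η n * Real.exp (θ * ∑ j ∈ Finset.Ioc k n, η j) := h1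
      _ ≤ η n * Real.exp θ :=
        mul_le_mul_of_nonneg_left h4 (le_of_lt (hpos n (by omega)))
  -- positivity of η n, and log facts
  have hηn : 0 < η n := hpos n (by omega)
  have hηn1 : η n < 1 := hub n (by omega)
  have hlogneg : Real.log (η n) < 0 := Real.log_neg hηn hηn1
  have habs : |Real.log (η n)| = -Real.log (η n) := abs_of_neg hlogneg
  have hLval : L = -Real.log η₁ :=
    hLspec ⟨by rw [← hη1]; exact hη1lt, by rw [← hη1]; exact hpos 1 le_rfl⟩
  have hLle : L ≤ -Real.log (η n) := by
    rw [hLval]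
    have : Real.log (η n) ≤ Real.log η₁ := by
      apply Real.log_le_log hηn
      rw [← hη1]; exact hmono' 1 n le_rfl (by omega)
    linarith
  by_cases hKlt : K < n
  · -- main case
    obtain ⟨m, rfl⟩ : ∃ m, n = m + 1 := ⟨n - 1, by omega⟩
    have hm1 : 1 ≤ m := by omega
    have hKm : K ≤ m := by omega
    have htlast : t (m + 1) - t m = η (m + 1) := by
      rw [tsub m (m + 1) (Nat.le_succ m), Finset.sum_Ioc_succ_top (le_refl m),
        Finset.Ioc_self]; simp
    -- bound each term
    have hterm : ∀ k ∈ Finset.Ico K (m + 1),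
        η k ^ (1 + β) / (t (m + 1) - t k)
          ≤ (η (m + 1) * Real.exp θ) ^ β * (1 + θ) * (η (k + 1) / (t (m + 1) - t k)) := by
      intro k hk
      simp only [Finset.mem_Ico] at hk
      have hk1 : 1 ≤ k := le_trans hK1 hk.1
      have hηk : 0 < η k := hpos k hk1
      have hD : 0 < t (m + 1) - t k := tlt k (m + 1) hk.2
      have hrw : η k ^ (1 + β) = η k ^ β * η k := by
        rw [Real.rpow_add hηk, Real.rpow_one]; ring
      have hnum : η k ^ β * η k ≤ (η (m + 1) * Real.exp θ) ^ β * ((1 + θ) * η (k + 1)) := by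
        apply mul_le_mul
        · exact Real.rpow_le_rpow (le_of_lt hηk) (hwin k hk.1 (by omega)) (le_of_lt hβ0)
        · exact hratio k hk1
        · exact le_of_lt hηk
        · exact Real.rpow_nonneg (mul_nonneg (le_of_lt hηn) (le_of_lt (Real.exp_pos θ))) β
      have heq : (η (m + 1) * Real.exp θ) ^ β * (1 + θ) * (η (k + 1) / (t (m + 1) - t k))
          = ((η (m + 1) * Real.exp θ) ^ β * ((1 + θ) * η (k + 1))) / (t (m + 1) - t k) := by
        ring
      rw [hrw, heq]
      gcongr
    have hsum1 : ∑ k ∈ Finset.Ico K (m + 1), η k ^ (1 + β) / (t (m + 1) - t k)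
        ≤ (η (m + 1) * Real.exp θ) ^ β * (1 + θ)
          * ∑ k ∈ Finset.Ico K (m + 1), η (k + 1) / (t (m + 1) - t k) := by
      rw [Finset.mul_sum]
      exact Finset.sum_le_sum hterm
    -- telescoping bound on B
    have hB : ∑ k ∈ Finset.Ico K (m + 1), η (k + 1) / (t (m + 1) - t k)
        ≤ 1 - Real.log (η (m + 1)) := by
      rw [Finset.sum_Ico_succ_top hKm, htlast,
        div_self (ne_of_gt (hpos (m + 1) (by omega)))]
      have htel : ∑ k ∈ Finset.Ico K m, η (k + 1) / (t (m + 1) - t k)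
          ≤ ∑ k ∈ Finset.Ico K m,
              (Real.log (t (m + 1) - t k) - Real.log (t (m + 1) - t (k + 1))) := by
        apply Finset.sum_le_sum
        intro k hk
        simp only [Finset.mem_Ico] at hk
        have ha : 0 < t (m + 1) - t k := tlt k (m + 1) (by omega)
        have hb : 0 < t (m + 1) - t (k + 1) := tlt (k + 1) (m + 1) (by omega)
        have hab : (t (m + 1) - t k) - (t (m + 1) - t (k + 1)) = η (k + 1) := by
          have := tsub k (k + 1) (Nat.le_succ k)
          rw [Finset.sum_Ioc_succ_top (le_refl k), Finset.Ioc_self] at this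
          simp at this; linarith
        have h := Real.log_le_sub_one_of_pos
          (div_pos hb ha)
        rw [Real.log_div (ne_of_gt hb) (ne_of_gt ha)] at h
        have hq : (t (m + 1) - t (k + 1)) / (t (m + 1) - t k) - 1
            = -(η (k + 1) / (t (m + 1) - t k)) := by
          field_simp
          linarith
        rw [hq] at h
        linarith
      have hteleq : ∑ k ∈ Finset.Ico K m,
            (Real.log (t (m + 1) - t k) - Real.log (t (m + 1) - t (k + 1)))
          = Real.log (t (m + 1) - t K) - Real.log (t (m + 1) - t m) := by
        rw [Finset.sum_Ico_eq_sub _ hKm, Finset.sum_range_sub' (fun k => Real.log (t (m + 1) - t k)),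
          Finset.sum_range_sub' (fun k => Real.log (t (m + 1) - t k))]
        ring
      have hlogK : Real.log (t (m + 1) - t K) ≤ 0 := Real.log_nonpos (le_of_lt (tlt K (m + 1) (by omega))) hKle
      rw [hteleq, htlast] at htel
      linarith
    -- combine
    have hηmpos : 0 < η (m + 1) := hηn
    have hfac : (η (m + 1) * Real.exp θ) ^ β ≤ η (m + 1) ^ β * Real.exp θ := by
      rw [Real.mul_rpow (le_of_lt hηmpos) (le_of_lt (Real.exp_pos θ)),
        ← Real.exp_mul]
      apply mul_le_mul_of_nonneg_left _ (Real.rpow_nonneg (le_of_lt hηmpos) β)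
      apply Real.exp_le_exp.mpr
      nlinarith
    have h1 : ∑ k ∈ Finset.Ico K (m + 1), η k ^ (1 + β) / (t (m + 1) - t k)
        ≤ (η (m + 1) * Real.exp θ) ^ β * (1 + θ) * (1 - Real.log (η (m + 1))) :=
      le_trans hsum1 (mul_le_mul_of_nonneg_left hB
        (mul_nonneg (Real.rpow_nonneg (mul_nonneg (le_of_lt hηn)
          (le_of_lt (Real.exp_pos θ))) β) (by linarith)))
    have h3 : 1 - Real.log (η (m + 1)) ≤ (1 + 1 / L) * (-Real.log (η (m + 1))) := by
      have h4 : (1 / L) * L ≤ (1 / L) * (-Real.log (η (m + 1))) :=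
        mul_le_mul_of_nonneg_left hLle (le_of_lt hLinv)
      have h5 : (1 / L) * L = 1 := by field_simp
      nlinarith
    rw [habs]
    calc ∑ k ∈ Finset.Ico K (m + 1), η k ^ (1 + β) / (t (m + 1) - t k)
        ≤ (η (m + 1) * Real.exp θ) ^ β * (1 + θ) * (1 - Real.log (η (m + 1))) := h1
      _ ≤ (η (m + 1) ^ β * Real.exp θ) * (1 + θ) * (1 - Real.log (η (m + 1))) := by
          have hpos1 : 0 ≤ 1 - Real.log (η (m + 1)) := by linarith
          have := mul_le_mul_of_nonneg_right hfac (le_of_lt (by positivity : (0:ℝ) < 1 + θ))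
          exact mul_le_mul_of_nonneg_right this hpos1
      _ ≤ (η (m + 1) ^ β * Real.exp θ) * (1 + θ) * ((1 + 1 / L) * (-Real.log (η (m + 1)))) := by
          apply mul_le_mul_of_nonneg_left h3
            (mul_nonneg (mul_nonneg (Real.rpow_nonneg (le_of_lt hηmpos) β)
              (le_of_lt (Real.exp_pos θ))) (by linarith))
      _ = Real.exp θ * (1 + θ) * (1 + 1 / L) * η (m + 1) ^ β * (-Real.log (η (m + 1))) := by
          ring
  · -- empty sum case
    have : Finset.Ico K n = ∅ := Finset.Ico_eq_empty (by omega)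
    rw [this, Finset.sum_empty]
    exact mul_nonneg (mul_nonneg (le_of_lt hCpos) (Real.rpow_nonneg (le_of_lt hηn) β))
      (abs_nonneg _)
end

section
/- Suppose the step-size assumption holds with constant θ > 0. Then for all indices 1 ≤ m ≤ n one has η_m ≤ η_n e^{θ(t_n − t_m)}; in particular, if t_n − t_m ≤ 1 then η_m ≤ e^{θ} η_n. -/
open Real Filter

theorem stmt5 (θ : ℝ) (hθ : 0 < θ) (η : ℕ → ℝ)
    (hpos : ∀ n, 1 ≤ n → 0 < η n)
    (hmono : ∀ n, 1 ≤ n → η (n + 1) ≤ η n)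
    (hlim : Tendsto η atTop (nhds 0))
    (hsum : Tendsto (fun n => ∑ k ∈ Finset.Icc 1 n, η k) atTop atTop)
    (hstep : ∀ n, 2 ≤ n → η (n - 1) - η n ≤ θ * η n ^ 2) :
    ∀ m n, 1 ≤ m → m ≤ n →
      η m ≤ η n *
        Real.exp (θ * ((∑ k ∈ Finset.Icc 1 n, η k) - ∑ k ∈ Finset.Icc 1 m, η k)) ∧
      ((∑ k ∈ Finset.Icc 1 n, η k) - (∑ k ∈ Finset.Icc 1 m, η k) ≤ 1 →
        η m ≤ Real.exp θ * η n) := by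
  intro m n hm hmn
  set S : ℕ → ℝ := fun n => ∑ k ∈ Finset.Icc 1 n, η k with hS
  have key : η m ≤ η n * Real.exp (θ * (S n - S m)) := by
    induction n, hmn using Nat.le_induction with
    | base => simp
    | succ n hn ih =>
      have h1 : 1 ≤ n := le_trans hm hn
      have hS' : S (n + 1) = S n + η (n + 1) := by
        simp only [hS]
        exact Finset.sum_Icc_succ_top (by omega) η
      have hpos1 : 0 < η (n + 1) := hpos _ (by omega)
      have hstep' := hstep (n + 1) (by omega)
      simp only [Nat.add_sub_cancel] at hstep'
      have h2 : η n ≤ η (n + 1) * Real.exp (θ * η (n + 1)) := by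
        have hb : η n ≤ η (n + 1) * (1 + θ * η (n + 1)) := by nlinarith
        have he := Real.add_one_le_exp (θ * η (n + 1))
        nlinarith [hpos1.le]
      calc η m ≤ η n * Real.exp (θ * (S n - S m)) := ih
        _ ≤ (η (n + 1) * Real.exp (θ * η (n + 1))) * Real.exp (θ * (S n - S m)) :=
              mul_le_mul_of_nonneg_right h2 (Real.exp_pos _).le
        _ = η (n + 1) * Real.exp (θ * (S (n + 1) - S m)) := by
              rw [hS', mul_assoc, ← Real.exp_add]; ring_nf
  refine ⟨key, fun h1 => ?_⟩
  have hnpos : 0 < η n := hpos n (le_trans hm hmn)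
  calc η m ≤ η n * Real.exp (θ * (S n - S m)) := key
    _ ≤ η n * Real.exp θ := by
        refine mul_le_mul_of_nonneg_left ?_ hnpos.le
        apply Real.exp_le_exp.2
        nlinarith
    _ = Real.exp θ * η n := mul_comm _ _
end

section
/- Suppose the drift assumption holds. Then there exists a constant C > 0, depending only on L₁ and r, such that for all x, y ∈ ℝ^d, all α ∈ (0, 1/2), and all η ∈ (0, 1]: | b(y) − b(x)/(1 + η^α ‖∇b(x)‖_op) | ≤ L₁(1 + |x|^r + |y|^r)|x − y| + C η^α (1 + |x|^{2r+1}). -/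
/-!
The growth condition (iii) makes `b` Lipschitz with constant `≲ 1 + |x|^r` on the unit ball
around `x`, so `‖∇b(x)‖ ≲ 1 + |x|^r`. Writing `t = η^α ‖∇b(x)‖`, the triangle inequality gives
`|b(y) - b(x)/(1 + t)| ≤ |b(y) - b(x)| + t |b(x)|`; the first term is controlled by (iii), and by
(ii) the second is at most `η^α L₁ (‖∇b(x)‖ + |x| ‖∇b(x)‖²) ≲ η^α (1 + |x|^{2r+1})`.
-/

open scoped RealInnerProductSpace

namespace Real

lemma rpow_le_one_add_rpow {a s p : ℝ} (ha : 0 ≤ a) (hs : 0 ≤ s) (hsp : s ≤ p) :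
    a ^ s ≤ 1 + a ^ p := by
  rcases le_or_gt a 1 with h | h
  · linarith [rpow_le_one ha h hs, rpow_nonneg ha p]
  · linarith [rpow_le_rpow_of_exponent_le h.le hsp]

lemma add_rpow_le_two_rpow_mul {a b r : ℝ} (ha : 0 ≤ a) (hb : 0 ≤ b) (hr : 0 ≤ r) :
    (a + b) ^ r ≤ 2 ^ r * (a ^ r + b ^ r) := by
  have hmax : 0 ≤ max a b := le_max_of_le_left ha
  calc (a + b) ^ r ≤ (2 * max a b) ^ r :=
        rpow_le_rpow (by positivity) (by linarith [le_max_left a b, le_max_right a b]) hr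
    _ = 2 ^ r * max a b ^ r := mul_rpow zero_le_two hmax
    _ ≤ 2 ^ r * (a ^ r + b ^ r) := by
        gcongr
        rcases max_choice a b with h | h <;> rw [h] <;>
          linarith [rpow_nonneg ha r, rpow_nonneg hb r]

lemma mul_one_add_rpow_sq_le {a r : ℝ} (ha : 0 ≤ a) (hr : 0 ≤ r) :
    a * (1 + a ^ r) ^ 2 ≤ 4 * (1 + a ^ (2 * r + 1)) := by
  have h₁ : a ≤ 1 + a ^ (2 * r + 1) := by
    simpa using rpow_le_one_add_rpow ha zero_le_one (by linarith : (1 : ℝ) ≤ 2 * r + 1)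
  have h₂ : a * a ^ r ≤ 1 + a ^ (2 * r + 1) := by
    rw [← rpow_one_add' ha (by linarith)]
    exact rpow_le_one_add_rpow ha (by linarith) (by linarith)
  have h₃ : a * (a ^ r) ^ 2 = a ^ (2 * r + 1) := by
    rw [← rpow_mul_natCast ha, ← rpow_one_add' ha (by positivity)]
    ring_nf
  nlinarith

lemma add_mul_sq_le_of_le_mul_one_add_rpow {a r D M : ℝ} (ha : 0 ≤ a) (hr : 0 ≤ r)
    (hD₀ : 0 ≤ D) (hD : D ≤ M * (1 + a ^ r)) :
    D + a * D ^ 2 ≤ (2 * M + 4 * M ^ 2) * (1 + a ^ (2 * r + 1)) := by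
  have hM : 0 ≤ M := nonneg_of_mul_nonneg_left (hD₀.trans hD) (by positivity)
  have hD₂ : a * D ^ 2 ≤ M ^ 2 * (a * (1 + a ^ r) ^ 2) := by
    have := mul_le_mul_of_nonneg_left (pow_le_pow_left₀ hD₀ hD 2) ha
    linarith
  have h₁ : M * (1 + a ^ r) ≤ M * (2 * (1 + a ^ (2 * r + 1))) := by
    gcongr
    linarith [rpow_le_one_add_rpow ha hr (by linarith : r ≤ 2 * r + 1),
      rpow_nonneg ha (2 * r + 1)]
  have h₂ := mul_le_mul_of_nonneg_left (mul_one_add_rpow_sq_le ha hr) (sq_nonneg M)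
  linarith

end Real

section NormedSpace

variable {E F : Type*} [NormedAddCommGroup E] [NormedSpace ℝ E] [NormedAddCommGroup F]
  [NormedSpace ℝ F]

lemma norm_fderiv_le_of_norm_sub_le {f : E → F} {L r : ℝ} (hL : 0 ≤ L) (hr : 0 ≤ r)
    (hf : ∀ x y, ‖f x - f y‖ ≤ L * (1 + ‖x‖ ^ r + ‖y‖ ^ r) * ‖x - y‖) (x : E) :
    ‖fderiv ℝ f x‖ ≤ L * (1 + 2 * 2 ^ r) * (1 + ‖x‖ ^ r) := by
  have hball : ‖fderiv ℝ f x‖ ≤ L * (1 + 2 * (‖x‖ + 1) ^ r) := by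
    refine norm_fderiv_le_of_lip' ℝ (by positivity) ?_
    filter_upwards [Metric.ball_mem_nhds x one_pos] with u hu
    rw [mem_ball_iff_norm] at hu
    have hu₁ : ‖u‖ ≤ ‖x‖ + 1 := by linarith [norm_le_norm_add_norm_sub' u x]
    have hu₂ : ‖u‖ ^ r ≤ (‖x‖ + 1) ^ r := Real.rpow_le_rpow (norm_nonneg u) hu₁ hr
    have hx₂ : ‖x‖ ^ r ≤ (‖x‖ + 1) ^ r := Real.rpow_le_rpow (norm_nonneg x) (by linarith) hr
    calc ‖f u - f x‖ ≤ L * (1 + ‖u‖ ^ r + ‖x‖ ^ r) * ‖u - x‖ := hf u x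
      _ ≤ L * (1 + 2 * (‖x‖ + 1) ^ r) * ‖u - x‖ := by gcongr L * ?_ * _; linarith
  have h₂ : (‖x‖ + 1) ^ r ≤ 2 ^ r * (‖x‖ ^ r + 1) := by
    simpa using Real.add_rpow_le_two_rpow_mul (norm_nonneg x) zero_le_one hr
  calc ‖fderiv ℝ f x‖ ≤ L * (1 + 2 * (‖x‖ + 1) ^ r) := hball
    _ ≤ L * (1 + 2 * 2 ^ r) * (1 + ‖x‖ ^ r) := by
        rw [mul_assoc]
        gcongr
        nlinarith [Real.rpow_pos_of_pos two_pos r, Real.rpow_nonneg (norm_nonneg x) r]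

lemma norm_sub_inv_one_add_smul_le (u v : F) {t : ℝ} (ht : 0 ≤ t) :
    ‖v - (1 + t)⁻¹ • u‖ ≤ ‖v - u‖ + t * ‖u‖ := by
  have hsplit : v - (1 + t)⁻¹ • u = (v - u) + (t / (1 + t)) • u := by
    have : t / (1 + t) = 1 - (1 + t)⁻¹ := by field_simp; ring
    rw [this, sub_smul, one_smul]
    abel
  have hcoef : t / (1 + t) ≤ t := div_le_self ht (by linarith)
  calc ‖v - (1 + t)⁻¹ • u‖ ≤ ‖v - u‖ + ‖(t / (1 + t)) • u‖ := by
        rw [hsplit]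
        exact norm_add_le _ _
    _ ≤ ‖v - u‖ + t * ‖u‖ := by
        rw [norm_smul, Real.norm_of_nonneg (by positivity)]
        gcongr

end NormedSpace

theorem stmt8 {d : ℕ} (r L₁ : ℝ) (hr : 0 ≤ r) (hL₁ : 0 < L₁) :
    ∃ C > 0,
      ∀ (b : EuclideanSpace ℝ (Fin d) → EuclideanSpace ℝ (Fin d)) (lam : ℝ),
        0 < lam →
        ContDiff ℝ 1 b →
        (∀ x, ⟪x, b x⟫ ≤ L₁ - lam * ‖x‖ ^ (r + 2)) →
        (∀ x, ‖b x‖ ≤ L₁ * (1 + ‖x‖ * ‖fderiv ℝ b x‖)) →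
        (∀ x y, ‖b x - b y‖ ≤ L₁ * (1 + ‖x‖ ^ r + ‖y‖ ^ r) * ‖x - y‖) →
        ∀ (x y : EuclideanSpace ℝ (Fin d)) (α η : ℝ),
          0 < α → α < 1 / 2 → 0 < η → η ≤ 1 →
          ‖b y - (1 + η ^ α * ‖fderiv ℝ b x‖)⁻¹ • b x‖ ≤
            L₁ * (1 + ‖x‖ ^ r + ‖y‖ ^ r) * ‖x - y‖ +
              C * η ^ α * (1 + ‖x‖ ^ (2 * r + 1)) := by
  set M : ℝ := L₁ * (1 + 2 * 2 ^ r)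
  refine ⟨L₁ * (2 * M + 4 * M ^ 2), by positivity, ?_⟩
  intro b _ _ _ _ hb_growth hb_lip x y α η _ _ hη _
  set D := ‖fderiv ℝ b x‖
  have hD : D ≤ M * (1 + ‖x‖ ^ r) := norm_fderiv_le_of_norm_sub_le hL₁.le hr hb_lip x
  calc ‖b y - (1 + η ^ α * D)⁻¹ • b x‖ ≤ ‖b y - b x‖ + η ^ α * D * ‖b x‖ :=
        norm_sub_inv_one_add_smul_le _ _ (by positivity)
    _ ≤ L₁ * (1 + ‖x‖ ^ r + ‖y‖ ^ r) * ‖x - y‖ + η ^ α * L₁ * (D + ‖x‖ * D ^ 2) := by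
        rw [norm_sub_rev]
        have := mul_le_mul_of_nonneg_left (hb_growth x) (by positivity : 0 ≤ η ^ α * D)
        linarith [hb_lip x y]
    _ ≤ L₁ * (1 + ‖x‖ ^ r + ‖y‖ ^ r) * ‖x - y‖ +
          L₁ * (2 * M + 4 * M ^ 2) * η ^ α * (1 + ‖x‖ ^ (2 * r + 1)) := by
        have := Real.add_mul_sq_le_of_le_mul_one_add_rpow (norm_nonneg x) hr (norm_nonneg _) hD
        have := mul_le_mul_of_nonneg_left this (by positivity : 0 ≤ η ^ α * L₁)
        linarith
end

section
/- Suppose the drift assumption holds and fix α ∈ (0, 1/2). Then there exist constants C > 0, λ' > 0 and η̄ > 0, depending only on L₁, λ, r, α, such that for every y ∈ ℝ^d and every η ∈ (0, η̄]: | y + η b(y)/(1 + η^α ‖∇b(y)‖_op) | ≤ (1 − λ' η)|y| + C η. -/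
open scoped RealInnerProductSpace

lemma fderiv_norm_bound {E : Type*} [NormedAddCommGroup E] [NormedSpace ℝ E]
    {F : Type*} [NormedAddCommGroup F] [NormedSpace ℝ F]
    (r L₁ : ℝ) (hr : 0 ≤ r) (hL₁ : 0 < L₁)
    (b : E → F) (hlip : ∀ x z, ‖b x - b z‖ ≤ L₁ * (1 + ‖x‖ ^ r + ‖z‖ ^ r) * ‖x - z‖)
    (y : E) : ‖fderiv ℝ b y‖ ≤ L₁ * (1 + 2 * (‖y‖ + 1) ^ r) := by
  have hC : 0 ≤ L₁ * (1 + 2 * (‖y‖ + 1) ^ r) := by positivity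
  refine norm_fderiv_le_of_lip' ℝ hC ?_
  filter_upwards [Metric.ball_mem_nhds y one_pos] with x hx
  have hxy : ‖x‖ ≤ ‖y‖ + 1 := by
    have := norm_sub_norm_le x y
    have hd : ‖x - y‖ < 1 := by simpa [dist_eq_norm] using hx
    linarith
  have h1 : ‖x‖ ^ r ≤ (‖y‖ + 1) ^ r := Real.rpow_le_rpow (norm_nonneg _) hxy hr
  have h2 : ‖y‖ ^ r ≤ (‖y‖ + 1) ^ r :=
    Real.rpow_le_rpow (norm_nonneg _) (by linarith) hr
  calc ‖b x - b y‖ ≤ L₁ * (1 + ‖x‖ ^ r + ‖y‖ ^ r) * ‖x - y‖ := hlip x y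
    _ ≤ L₁ * (1 + 2 * (‖y‖ + 1) ^ r) * ‖x - y‖ := by
        have : L₁ * (1 + ‖x‖ ^ r + ‖y‖ ^ r) ≤ L₁ * (1 + 2 * (‖y‖ + 1) ^ r) := by
          apply mul_le_mul_of_nonneg_left _ hL₁.le
          linarith
        exact mul_le_mul_of_nonneg_right this (norm_nonneg _)

/-- key1 core: pure polynomial inequality. -/
lemma aux_key1 {L₁ η s N n ea e1a : ℝ} (hL₁ : 0 < L₁) (hη : 0 < η) (hs : 0 ≤ s)
    (hN : 0 ≤ N) (hea : 0 ≤ ea) (he1a : 0 ≤ e1a) (hprod : e1a * ea = η)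
    (hn : n ≤ L₁ * (1 + s * N)) :
    η * n ≤ L₁ * (η + e1a * s) * (1 + ea * N) := by
  have h1 : η * n ≤ η * (L₁ * (1 + s * N)) := mul_le_mul_of_nonneg_left hn hη.le
  have hexp : L₁ * (η + e1a * s) * (1 + ea * N) =
      L₁ * η + L₁ * (η * (ea * N)) + L₁ * (e1a * s) + L₁ * (s * N) * η := by
    linear_combination (L₁ * s * N) * hprod
  have e1' : 0 ≤ L₁ * (η * (ea * N)) := by positivity
  have e2' : 0 ≤ L₁ * (e1a * s) := by positivity
  linarith [h1, hexp, e1', e2']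

/-- key2 core. -/
lemma aux_key2 {lam η s sr g : ℝ} (hlam : 0 < lam) (hη : 0 < η) (hs : 1 ≤ s)
    (hsr : 1 ≤ sr) (hg : g ≤ 1 + sr) (hg0 : 0 < g) :
    lam / 2 * η * (s * s) * g ≤ lam * η * (sr * (s * s)) := by
  calc lam / 2 * η * (s * s) * g ≤ lam / 2 * η * (s * s) * (1 + sr) := by
        have h0 : (0:ℝ) ≤ lam / 2 * η * (s * s) := by positivity
        exact mul_le_mul_of_nonneg_left hg h0
    _ ≤ lam * η * (sr * (s * s)) := by
        have h1 : lam * η * (s * s) * ((1 + sr) / 2) ≤ lam * η * (s * s) * sr :=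
          mul_le_mul_of_nonneg_left (by linarith) (by positivity)
        linarith

/-- key4 core. -/
lemma aux_key4 {L₁ η s e1a e12a hn lam : ℝ} (hL₁ : 0 < L₁) (hη : 0 < η) (hs : 1 ≤ s)
    (he1a : 0 ≤ e1a) (he12a : 0 ≤ e12a) (hhn0 : 0 ≤ hn)
    (hηle : η ≤ e1a * s) (hsplit : e1a * e1a = e12a * η)
    (hP3 : 4 * L₁ ^ 2 * e12a ≤ lam / 8)
    (h1 : hn ≤ L₁ * (η + e1a * s)) :
    hn ^ 2 ≤ lam / 8 * η * (s * s) := by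
  have h2 : hn ≤ 2 * L₁ * (e1a * s) := by nlinarith
  have h3 : hn ^ 2 ≤ (2 * L₁ * (e1a * s)) ^ 2 := by nlinarith
  have h4 : (2 * L₁ * (e1a * s)) ^ 2 = 4 * L₁ ^ 2 * e12a * η * (s * s) := by
    linear_combination (4 * L₁ ^ 2 * (s * s)) * hsplit
  nlinarith [mul_le_mul_of_nonneg_right hP3
    (by positivity : (0:ℝ) ≤ η * (s * s)), sq_nonneg s]

/-- combination of the three keys into the squared contraction. -/
lemma aux_main {lam η s h ip L₁ X hn2 : ℝ} (hlam : 0 < lam) (hη : 0 < η)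
    (hs : 0 ≤ s) (hh0 : 0 < h) (hhη : h ≤ η) (hL₁ : 0 < L₁)
    (hip : ip ≤ L₁ - lam * X)
    (key2 : lam / 2 * η * (s * s) ≤ lam * h * X)
    (key3 : L₁ ≤ lam / 8 * (s * s))
    (key4 : hn2 ≤ lam / 8 * η * (s * s)) :
    s * s + 2 * (h * ip) + hn2 ≤ ((1 - lam / 8 * η) * s) ^ 2 := by
  have h1 : 2 * (h * ip) ≤ 2 * h * L₁ - 2 * (lam * h * X) := by
    nlinarith [mul_le_mul_of_nonneg_left hip (by linarith : (0:ℝ) ≤ 2 * h)]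
  have h2 : 2 * h * L₁ ≤ 2 * η * L₁ := by nlinarith
  have h3 : 2 * η * L₁ ≤ 2 * η * (lam / 8 * (s * s)) :=
    mul_le_mul_of_nonneg_left key3 (by positivity)
  nlinarith [sq_nonneg (lam / 8 * η * s)]

lemma aux_sq_le {X Y : ℝ} (hX : 0 ≤ X) (hY : 0 ≤ Y) (h : X ^ 2 ≤ Y ^ 2) : X ≤ Y := by
  nlinarith

set_option maxHeartbeats 1000000 in
theorem stmt10 {d : ℕ} (r L₁ lam α : ℝ) (hr : 0 ≤ r) (hL₁ : 0 < L₁) (hlam : 0 < lam)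
    (hα0 : 0 < α) (hα : α < 1 / 2) :
    ∃ C > 0, ∃ lam' > 0, ∃ ηbar > 0,
      ∀ (b : EuclideanSpace ℝ (Fin d) → EuclideanSpace ℝ (Fin d)),
        ContDiff ℝ 1 b →
        (∀ x, ⟪x, b x⟫ ≤ L₁ - lam * ‖x‖ ^ (r + 2)) →
        (∀ x, ‖b x‖ ≤ L₁ * (1 + ‖x‖ * ‖fderiv ℝ b x‖)) →
        (∀ x y, ‖b x - b y‖ ≤ L₁ * (1 + ‖x‖ ^ r + ‖y‖ ^ r) * ‖x - y‖) →
        ∀ (y : EuclideanSpace ℝ (Fin d)) (η : ℝ), 0 < η → η ≤ ηbar →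
          ‖y + (η / (1 + η ^ α * ‖fderiv ℝ b y‖)) • b y‖ ≤
            (1 - lam' * η) * ‖y‖ + C * η := by
  have h2α : 0 < 1 - 2 * α := by linarith
  set R : ℝ := max 1 (Real.sqrt (8 * L₁ / lam)) with hRdef
  have hR1 : (1 : ℝ) ≤ R := le_max_left _ _
  have hR0 : (0 : ℝ) < R := lt_of_lt_of_le one_pos hR1
  have hRsq : L₁ ≤ lam / 8 * (R * R) := by
    have h1 : Real.sqrt (8 * L₁ / lam) ≤ R := le_max_right _ _
    have h2 : 8 * L₁ / lam ≤ R * R := by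
      have h3 := Real.mul_self_sqrt (by positivity : (0:ℝ) ≤ 8 * L₁ / lam)
      have h4 : Real.sqrt (8 * L₁ / lam) * Real.sqrt (8 * L₁ / lam) ≤ R * R :=
        mul_le_mul h1 h1 (Real.sqrt_nonneg _) hR0.le
      linarith
    rw [div_le_iff₀ hlam] at h2
    linarith
  set A : ℝ := 2 ^ (r + 2) * L₁ with hAdef
  have hA : 0 < A := mul_pos (Real.rpow_pos_of_pos two_pos _) hL₁
  set M : ℝ := L₁ * (1 + 2 * (R + 1) ^ r) with hMdef
  have hM : 0 < M := by positivity
  set C : ℝ := L₁ * (1 + R * M) + lam / 8 * R + 1 with hCdef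
  have hC : 0 < C := by positivity
  set e1 : ℝ := (lam / (32 * L₁ ^ 2)) ^ (1 / (1 - 2 * α)) with he1def
  set e2 : ℝ := (1 / A) ^ (1 / α) with he2def
  have he1 : 0 < e1 := Real.rpow_pos_of_pos (by positivity) _
  have he2 : 0 < e2 := Real.rpow_pos_of_pos (by positivity) _
  set ηbar : ℝ := min (min 1 (4 / lam)) (min e1 e2) with hηbardef
  have hηbar : 0 < ηbar := lt_min (lt_min one_pos (by positivity)) (lt_min he1 he2)
  refine ⟨C, hC, lam / 8, by positivity, ηbar, hηbar, ?_⟩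
  intro b hb hdrift hgrow hlipb y η hη hηle
  -- basic facts about η
  have hη1 : η ≤ 1 := le_trans hηle (le_trans (min_le_left _ _) (min_le_left _ _))
  have hP2 : lam / 8 * η ≤ 1 / 2 := by
    have h1 : η ≤ 4 / lam := le_trans hηle (le_trans (min_le_left _ _) (min_le_right _ _))
    rw [le_div_iff₀ hlam] at h1
    linarith
  have hP3 : 4 * L₁ ^ 2 * η ^ (1 - 2 * α) ≤ lam / 8 := by
    have hle : η ≤ e1 := le_trans hηle (le_trans (min_le_right _ _) (min_le_left _ _))
    have hpow : η ^ (1 - 2 * α) ≤ e1 ^ (1 - 2 * α) :=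
      Real.rpow_le_rpow hη.le hle h2α.le
    have he1p : e1 ^ (1 - 2 * α) = lam / (32 * L₁ ^ 2) := by
      rw [he1def, ← Real.rpow_mul (by positivity), one_div_mul_cancel h2α.ne',
        Real.rpow_one]
    rw [he1p] at hpow
    have h32 : 4 * L₁ ^ 2 * (lam / (32 * L₁ ^ 2)) = lam / 8 := by
      field_simp; ring
    linarith [mul_le_mul_of_nonneg_left hpow (by positivity : (0:ℝ) ≤ 4 * L₁ ^ 2)]
  have hP4 : A * η ^ α ≤ 1 := by
    have hle : η ≤ e2 := le_trans hηle (le_trans (min_le_right _ _) (min_le_right _ _))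
    have hpow : η ^ α ≤ e2 ^ α := Real.rpow_le_rpow hη.le hle hα0.le
    have he2p : e2 ^ α = 1 / A := by
      rw [he2def, ← Real.rpow_mul (by positivity), one_div_mul_cancel hα0.ne',
        Real.rpow_one]
    rw [he2p] at hpow
    calc A * η ^ α ≤ A * (1 / A) := mul_le_mul_of_nonneg_left hpow hA.le
      _ = 1 := by field_simp
  -- names
  set N : ℝ := ‖fderiv ℝ b y‖ with hNdef
  have hN0 : 0 ≤ N := norm_nonneg _
  have hNle : N ≤ L₁ * (1 + 2 * (‖y‖ + 1) ^ r) :=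
    fderiv_norm_bound r L₁ hr hL₁ b hlipb y
  have hηα0 : 0 ≤ η ^ α := Real.rpow_nonneg hη.le _
  set g : ℝ := 1 + η ^ α * N with hgdef
  have hg1 : 1 ≤ g := le_add_of_nonneg_right (mul_nonneg hηα0 hN0)
  have hg0 : 0 < g := lt_of_lt_of_le one_pos hg1
  set h : ℝ := η / g with hhdef
  have hh0 : 0 < h := div_pos hη hg0
  have hhη : h ≤ η := div_le_self hη.le hg1
  set s : ℝ := ‖y‖ with hsdef
  have hs0 : 0 ≤ s := norm_nonneg _
  set n : ℝ := ‖b y‖ with hndef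
  have hn0 : 0 ≤ n := norm_nonneg _
  have hbd : n ≤ L₁ * (1 + s * N) := hgrow y
  have hnorm : ‖y + h • b y‖ ≤ s + h * n := by
    calc ‖y + h • b y‖ ≤ ‖y‖ + ‖h • b y‖ := norm_add_le _ _
      _ = s + h * n := by rw [norm_smul, Real.norm_eq_abs, abs_of_pos hh0]
  rcases le_or_gt s R with hcase | hcase
  · -- small ‖y‖ : crude bound
    have hNM : N ≤ M := by
      refine le_trans hNle ?_
      rw [hMdef]
      have h1 : (s + 1) ^ r ≤ (R + 1) ^ r :=
        Real.rpow_le_rpow (by linarith) (by linarith) hr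
      linarith [mul_le_mul_of_nonneg_left h1 (by positivity : (0:ℝ) ≤ 2 * L₁)]
    have hnB : h * n ≤ η * (L₁ * (1 + R * M)) := by
      have hsN : s * N ≤ R * M := mul_le_mul hcase hNM hN0 hR0.le
      have h1 : n ≤ L₁ * (1 + R * M) := by
        refine le_trans hbd ?_
        linarith [mul_le_mul_of_nonneg_left hsN hL₁.le]
      calc h * n ≤ η * n := mul_le_mul_of_nonneg_right hhη hn0
        _ ≤ η * (L₁ * (1 + R * M)) := mul_le_mul_of_nonneg_left h1 hη.le
    refine le_trans hnorm ?_
    rw [hCdef]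
    linarith [mul_le_mul_of_nonneg_left hcase
      (mul_pos (by positivity : (0:ℝ) < lam / 8) hη).le, hη.le]
  · -- large ‖y‖ : contraction via squared norms
    have hs1 : (1 : ℝ) ≤ s := le_trans hR1 hcase.le
    have hspos : (0 : ℝ) < s := lt_of_lt_of_le one_pos hs1
    have hsr1 : (1 : ℝ) ≤ s ^ r := by
      have h1 := Real.rpow_le_rpow (by norm_num : (0:ℝ) ≤ 1) hs1 hr
      rwa [Real.one_rpow] at h1
    have hsr0 : (0 : ℝ) ≤ s ^ r := by linarith
    -- N ≤ A * s ^ r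
    have hNA : N ≤ A * s ^ r := by
      have h2r : (1 : ℝ) ≤ 2 ^ r := by
        have h1 := Real.rpow_le_rpow (by norm_num : (0:ℝ) ≤ 1) one_le_two hr
        rwa [Real.one_rpow] at h1
      have hs2 : (s + 1) ^ r ≤ 2 ^ r * s ^ r := by
        have h1 : (s + 1) ^ r ≤ (2 * s) ^ r :=
          Real.rpow_le_rpow (by linarith) (by linarith) hr
        rwa [Real.mul_rpow (by norm_num) hs0] at h1
      have h24 : (2:ℝ) ^ (r + 2) = 2 ^ r * 2 * 2 := by
        rw [show r + 2 = r + 1 + 1 by ring, Real.rpow_add two_pos,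
          Real.rpow_add two_pos, Real.rpow_one]
      refine le_trans hNle ?_
      rw [hAdef, h24]
      have h1 : 2 * L₁ * ((s+1)^r) ≤ 2 * L₁ * (2 ^ r * s ^ r) :=
        mul_le_mul_of_nonneg_left hs2 (by positivity)
      have h4 : (1:ℝ) * 1 ≤ 2 ^ r * s ^ r :=
        mul_le_mul h2r hsr1 one_pos.le (by linarith)
      have h5 : L₁ * 1 ≤ L₁ * (2 ^ r * s ^ r) :=
        mul_le_mul_of_nonneg_left (by linarith) hL₁.le
      linarith
    -- rpow splittings
    have hsplit1 : η ^ (1 - α) * η ^ α = η := by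
      rw [← Real.rpow_add hη, sub_add_cancel, Real.rpow_one]
    have hsplit2 : s ^ (r + 2) = s ^ r * (s * s) := by
      rw [show r + 2 = r + 1 + 1 by ring, Real.rpow_add hspos,
        Real.rpow_add hspos, Real.rpow_one]
      ring
    have hsplit3 : η ^ (1 - α) * η ^ (1 - α) = η ^ (1 - 2 * α) * η := by
      calc η ^ (1 - α) * η ^ (1 - α) = η ^ (1 - α + (1 - α)) :=
            (Real.rpow_add hη _ _).symm
        _ = η ^ (1 - 2 * α + 1) := by congr 1; ring
        _ = η ^ (1 - 2 * α) * η ^ (1:ℝ) := Real.rpow_add hη _ _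
        _ = η ^ (1 - 2 * α) * η := by rw [Real.rpow_one]
    have hηα1 : η ^ α ≤ 1 := Real.rpow_le_one hη.le hη1 hα0.le
    have hη1α0 : 0 ≤ η ^ (1 - α) := Real.rpow_nonneg hη.le _
    have hη12α0 : 0 ≤ η ^ (1 - 2*α) := Real.rpow_nonneg hη.le _
    -- key 1
    have key1 : h * n ≤ L₁ * (η + η ^ (1 - α) * s) := by
      rw [hhdef, div_mul_eq_mul_div, div_le_iff₀ hg0, hgdef]
      exact aux_key1 hL₁ hη hs0 hN0 hηα0 hη1α0 hsplit1 hbd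
    -- key 2
    have key2 : lam / 2 * η * (s * s) ≤ lam * h * s ^ (r + 2) := by
      have hgle : g ≤ 1 + s ^ r := by
        have h1 : η ^ α * N ≤ η ^ α * (A * s ^ r) := mul_le_mul_of_nonneg_left hNA hηα0
        have h2 : η ^ α * A * s ^ r ≤ 1 * s ^ r :=
          mul_le_mul_of_nonneg_right (by linarith [hP4]) hsr0
        rw [hgdef]
        linarith
      have heq : lam * h * s ^ (r + 2) = lam * η * (s ^ r * (s * s)) / g := by
        rw [hhdef, hsplit2]; ring
      rw [heq, le_div_iff₀ hg0]
      exact aux_key2 hlam hη hs1 hsr1 hgle hg0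
    -- key 3
    have key3 : L₁ ≤ lam / 8 * (s * s) := by
      refine le_trans hRsq ?_
      have h1 : R * R ≤ s * s := mul_le_mul hcase.le hcase.le hR0.le hs0
      exact mul_le_mul_of_nonneg_left h1 (by positivity)
    -- key 4
    have key4 : (h * n) ^ 2 ≤ lam / 8 * η * (s * s) := by
      refine aux_key4 hL₁ hη hs1 hη1α0 hη12α0 (mul_nonneg hh0.le hn0) ?_ ?_ hP3 key1
      · calc η = η ^ (1 - α) * η ^ α := hsplit1.symm
          _ ≤ η ^ (1 - α) * s := by
              apply mul_le_mul_of_nonneg_left (le_trans hηα1 hs1) hη1α0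
      · rw [hsplit3]
    -- squared norm identity
    have hsq : ‖y + h • b y‖ ^ 2 = s * s + 2 * (h * ⟪y, b y⟫) + (h * n) ^ 2 := by
      rw [norm_add_sq_real, real_inner_smul_right, norm_smul, Real.norm_eq_abs,
        abs_of_pos hh0, mul_pow]
      ring
    have hinner : ⟪y, b y⟫ ≤ L₁ - lam * s ^ (r + 2) := hdrift y
    have hfac : (0:ℝ) ≤ 1 - lam / 8 * η := by linarith
    have hmain : ‖y + h • b y‖ ^ 2 ≤ ((1 - lam / 8 * η) * s) ^ 2 := by
      rw [hsq]
      exact aux_main hlam hη hs0 hh0 hhη hL₁ hinner key2 key3 key4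
    have hfinal : ‖y + h • b y‖ ≤ (1 - lam / 8 * η) * s :=
      aux_sq_le (norm_nonneg _) (mul_nonneg hfac hs0) hmain
    calc ‖y + h • b y‖ ≤ (1 - lam / 8 * η) * s := hfinal
      _ ≤ (1 - lam / 8 * η) * s + C * η :=
          le_add_of_nonneg_right (mul_pos hC hη).le
end

section
/- Suppose the drift assumption and the diffusion assumption hold. Then for every p ≥ 1 there exists a constant C_p > 0 such that for every x ∈ ℝ^d, every α ∈ (0, 1/2), every η ∈ (0, 1], and every s ∈ (0, η], if ξ is a random vector with Gaussian distribution N( x + s b(x)/(1 + η^α ‖∇b(x)‖_op), s σ(x)σ(x)^T ), then E|ξ − x|^p ≤ C_p s^{p/2} (1 + |x|^{r+1})^p. -/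
open MeasureTheory Real
open scoped RealInnerProductSpace

/-- The operator (spectral) norm of a real matrix, viewed as a linear map on
Euclidean space. -/
noncomputable def matOpNorm {d : ℕ} (A : Matrix (Fin d) (Fin d) ℝ) : ℝ :=
  ‖LinearMap.toContinuousLinearMap (Matrix.toEuclideanLin A)‖

/-- The Gaussian measure on `ℝ^d` with mean `μ` and (positive definite) covariance
matrix `Γ`, defined through its density with respect to Lebesgue measure. -/
noncomputable def gaussianMeasure {d : ℕ} (μ : EuclideanSpace ℝ (Fin d))
    (Γ : Matrix (Fin d) (Fin d) ℝ) : Measure (EuclideanSpace ℝ (Fin d)) :=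
  volume.withDensity fun x =>
    ENNReal.ofReal (Real.sqrt (((2 * π) ^ d * Γ.det))⁻¹ *
      Real.exp (-⟪x - μ, Matrix.toEuclideanLin Γ⁻¹ (x - μ)⟫ / 2))

/-!
The density of `N(m, s A Aᵀ)` is dominated by `L ^ d (2πs)^(-d/2) exp(-‖w‖² / (2 s L²))`
with `w = z - m`: the bound `‖A⁻¹‖ ≤ L` gives `|det A| ≥ L^(-d)`, and `‖A‖ ≤ L` gives
`⟪w, (s A Aᵀ)⁻¹ w⟫ ≥ ‖w‖² / (s L²)`. Absorbing `‖w‖ ^ p` into half of the exponent bounds the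
centred `p`-th moment (and the total mass) by a constant times `s ^ (p / 2)`. The taming factor
gives `‖m - x‖ ≤ L₁ √s (1 + ‖x‖)`, since `√s ≤ η ^ α`, and
`(u + v) ^ p ≤ 2 ^ (p - 1) (u ^ p + v ^ p)` combines the two.
-/

lemma rpow_le_rpow_mul_exp {v q : ℝ} (hv : 0 ≤ v) (hq : 0 ≤ q) :
    v ^ q ≤ q ^ q * exp v := by
  rcases hq.eq_or_lt with rfl | hq
  · simpa using one_le_exp hv
  have h : (v / q) ^ q ≤ exp (v / q) ^ q :=
    rpow_le_rpow (by positivity) (by linarith [add_one_le_exp (v / q)]) hq.le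
  rwa [div_rpow hv hq.le, ← exp_mul, div_mul_cancel₀ _ hq.ne',
    div_le_iff₀ (rpow_pos_of_pos hq q), mul_comm] at h

lemma rpow_le_mul_exp_sq {t b q : ℝ} (ht : 0 ≤ t) (hb : 0 < b) (hq : 0 ≤ q) :
    t ^ q ≤ (q / b) ^ (q / 2) * exp (b / 2 * t ^ 2) := by
  have hv : 0 ≤ b / 2 * t ^ 2 := by positivity
  have key := rpow_le_rpow_mul_exp hv (div_nonneg hq zero_le_two)
  calc t ^ q = (b / 2 * t ^ 2) ^ (q / 2) * (2 / b) ^ (q / 2) := by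
        rw [← mul_rpow hv (by positivity), show b / 2 * t ^ 2 * (2 / b) = t ^ (2 : ℝ) by
          rw [rpow_two]; field_simp, ← rpow_mul ht]
        ring_nf
    _ ≤ (q / 2) ^ (q / 2) * exp (b / 2 * t ^ 2) * (2 / b) ^ (q / 2) := by gcongr
    _ = (q / b) ^ (q / 2) * exp (b / 2 * t ^ 2) := by
        rw [mul_right_comm, ← mul_rpow (by positivity) (by positivity)]
        field_simp

lemma lintegral_rpow_norm_mul_exp_neg_mul_sq_le {V : Type*} [NormedAddCommGroup V]
    [InnerProductSpace ℝ V] [FiniteDimensional ℝ V] [MeasurableSpace V] [BorelSpace V]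
    {b q : ℝ} (hb : 0 < b) (hq : 0 ≤ q) :
    ∫⁻ v : V, ENNReal.ofReal (‖v‖ ^ q * exp (-b * ‖v‖ ^ 2)) ≤
      ENNReal.ofReal ((q / b) ^ (q / 2) * (2 * π / b) ^ (Module.finrank ℝ V / 2 : ℝ)) := by
  have hb2 : 0 < b / 2 := half_pos hb
  have hgauss := GaussianFourier.integral_rexp_neg_mul_sq_norm (V := V) hb2
  have hint : Integrable fun v : V => exp (-(b / 2) * ‖v‖ ^ 2) :=
    .of_integral_ne_zero (by rw [hgauss]; positivity)
  calc ∫⁻ v : V, ENNReal.ofReal (‖v‖ ^ q * exp (-b * ‖v‖ ^ 2))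
      ≤ ∫⁻ v : V, ENNReal.ofReal ((q / b) ^ (q / 2)) *
          ENNReal.ofReal (exp (-(b / 2) * ‖v‖ ^ 2)) := by
        refine lintegral_mono fun v => ?_
        rw [← ENNReal.ofReal_mul (by positivity)]
        refine ENNReal.ofReal_le_ofReal ?_
        calc ‖v‖ ^ q * exp (-b * ‖v‖ ^ 2)
            ≤ (q / b) ^ (q / 2) * exp (b / 2 * ‖v‖ ^ 2) * exp (-b * ‖v‖ ^ 2) := by
              gcongr; exact rpow_le_mul_exp_sq (norm_nonneg v) hb hq
          _ = (q / b) ^ (q / 2) * exp (-(b / 2) * ‖v‖ ^ 2) := by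
              rw [mul_assoc, ← exp_add]; ring_nf
    _ = ENNReal.ofReal ((q / b) ^ (q / 2) * (2 * π / b) ^ (Module.finrank ℝ V / 2 : ℝ)) := by
        rw [lintegral_const_mul' _ _ ENNReal.ofReal_ne_top,
          ← ofReal_integral_eq_lintegral_ofReal hint (ae_of_all _ fun _ => (exp_pos _).le),
          hgauss, ← ENNReal.ofReal_mul (by positivity)]
        congr 3
        field_simp

lemma lintegral_enorm_sub_rpow_le {E : Type*} [NormedAddCommGroup E] [MeasurableSpace E]
    (μ : Measure E) (x m : E) {p : ℝ} (hp : 1 ≤ p) :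
    ∫⁻ z, ‖z - x‖ₑ ^ p ∂μ ≤
      2 ^ (p - 1) * (∫⁻ z, ‖z - m‖ₑ ^ p ∂μ + ‖m - x‖ₑ ^ p * μ Set.univ) := by
  calc ∫⁻ z, ‖z - x‖ₑ ^ p ∂μ ≤ ∫⁻ z, 2 ^ (p - 1) * (‖z - m‖ₑ ^ p + ‖m - x‖ₑ ^ p) ∂μ := by
        refine lintegral_mono fun z => ?_
        calc ‖z - x‖ₑ ^ p ≤ (‖z - m‖ₑ + ‖m - x‖ₑ) ^ p := by
              gcongr
              simpa using enorm_add_le (z - m) (m - x)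
          _ ≤ _ := ENNReal.rpow_add_le_mul_rpow_add_rpow _ _ hp
    _ = _ := by
        rw [lintegral_const_mul' _ _ (by simp), lintegral_add_right _ measurable_const,
          lintegral_const]

section

variable {d : ℕ}

lemma norm_toEuclideanLin_le (A : Matrix (Fin d) (Fin d) ℝ) (v : EuclideanSpace ℝ (Fin d)) :
    ‖Matrix.toEuclideanLin A v‖ ≤ matOpNorm A * ‖v‖ :=
  (LinearMap.toContinuousLinearMap (Matrix.toEuclideanLin A)).le_opNorm v

/-- The linear map of `A` sends the unit ball into the ball of radius `‖A‖`, and scales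
volumes by `|det A|`. -/
lemma abs_det_le_matOpNorm_pow (A : Matrix (Fin d) (Fin d) ℝ) :
    |A.det| ≤ matOpNorm A ^ d := by
  set E := EuclideanSpace ℝ (Fin d)
  have hA : 0 ≤ matOpNorm A := norm_nonneg _
  have himg : Matrix.toEuclideanLin A '' Metric.closedBall (0 : E) 1 ⊆
      Metric.closedBall 0 (matOpNorm A) := by
    rintro _ ⟨v, hv, rfl⟩
    rw [mem_closedBall_zero_iff] at hv ⊢
    simpa using (norm_toEuclideanLin_le A v).trans (mul_le_of_le_one_right hA hv)
  have hvol := measure_mono (μ := (volume : Measure E)) himg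
  rw [Measure.addHaar_image_linearMap, Measure.addHaar_closedBall _ _ hA,
    Measure.addHaar_closedBall _ _ zero_le_one, finrank_euclideanSpace_fin, one_pow,
    ENNReal.ofReal_one, one_mul, Matrix.toEuclideanLin, Matrix.toLpLin_eq_toLin,
    LinearMap.det_toLin,
    ENNReal.mul_le_mul_iff_left (Metric.measure_ball_pos _ _ one_pos).ne'
      measure_ball_lt_top.ne] at hvol
  exact (ENNReal.ofReal_le_ofReal_iff (by positivity)).1 hvol

lemma inv_smul_mul_transpose {A : Matrix (Fin d) (Fin d) ℝ} (hA : IsUnit A) {s : ℝ} (hs : s ≠ 0) :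
    (s • (A * A.transpose))⁻¹ = s⁻¹ • (A⁻¹.transpose * A⁻¹) := by
  have hdet : IsUnit A.det := (Matrix.isUnit_iff_isUnit_det A).1 hA
  apply Matrix.inv_eq_left_inv
  rw [Matrix.smul_mul, Matrix.mul_smul, smul_smul, inv_mul_cancel₀ hs, one_smul,
    Matrix.mul_assoc, ← Matrix.mul_assoc A⁻¹, Matrix.nonsing_inv_mul _ hdet, Matrix.one_mul,
    Matrix.transpose_nonsing_inv, Matrix.nonsing_inv_mul _ (by rwa [Matrix.det_transpose])]

lemma inner_toEuclideanLin_inv_smul_mul_transpose {A : Matrix (Fin d) (Fin d) ℝ}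
    (hA : IsUnit A) {s : ℝ} (hs : s ≠ 0) (w : EuclideanSpace ℝ (Fin d)) :
    ⟪w, Matrix.toEuclideanLin (s • (A * A.transpose))⁻¹ w⟫ =
      s⁻¹ * ‖Matrix.toEuclideanLin A⁻¹ w‖ ^ 2 := by
  rw [inv_smul_mul_transpose hA hs, _root_.map_smul, LinearMap.smul_apply, real_inner_smul_right,
    ← Matrix.conjTranspose_eq_transpose_of_trivial, Matrix.toEuclideanLin, Matrix.toLpLin_mul_same]
  change s⁻¹ * ⟪w, Matrix.toEuclideanLin A⁻¹.conjTranspose (Matrix.toEuclideanLin A⁻¹ w)⟫ = _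
  rw [Matrix.toEuclideanLin_conjTranspose_eq_adjoint, LinearMap.adjoint_inner_right,
    real_inner_self_eq_norm_sq]

lemma sq_norm_div_le_inner_toEuclideanLin_inv_smul_mul_transpose
    {A : Matrix (Fin d) (Fin d) ℝ} (hA : IsUnit A) {s L : ℝ} (hs : 0 < s) (hL : 0 < L)
    (hAL : matOpNorm A ≤ L) (w : EuclideanSpace ℝ (Fin d)) :
    ‖w‖ ^ 2 / (s * L ^ 2) ≤ ⟪w, Matrix.toEuclideanLin (s • (A * A.transpose))⁻¹ w⟫ := by
  have hAA : Matrix.toEuclideanLin A (Matrix.toEuclideanLin A⁻¹ w) = w := by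
    simp [Matrix.toEuclideanLin, Matrix.toLpLin_apply, Matrix.mulVec_mulVec,
      Matrix.mul_nonsing_inv _ ((Matrix.isUnit_iff_isUnit_det A).1 hA)]
  have hw : ‖w‖ ≤ L * ‖Matrix.toEuclideanLin A⁻¹ w‖ := by
    conv_lhs => rw [← hAA]
    exact (norm_toEuclideanLin_le A _).trans (by gcongr)
  rw [inner_toEuclideanLin_inv_smul_mul_transpose hA hs.ne', div_le_iff₀ (by positivity)]
  calc ‖w‖ ^ 2 ≤ (L * ‖Matrix.toEuclideanLin A⁻¹ w‖) ^ 2 := by gcongr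
    _ = s⁻¹ * ‖Matrix.toEuclideanLin A⁻¹ w‖ ^ 2 * (s * L ^ 2) := by field_simp

lemma sqrt_inv_two_pi_pow_mul_det_le (A : Matrix (Fin d) (Fin d) ℝ) {s L : ℝ} (hs : 0 < s)
    (hAL : matOpNorm A⁻¹ ≤ L) :
    √((2 * π) ^ d * (s • (A * A.transpose)).det)⁻¹ ≤
      L ^ d * ((2 * π * s) ^ ((d : ℝ) / 2))⁻¹ := by
  have hdet : (2 * π) ^ d * (s • (A * A.transpose)).det = (2 * π * s) ^ d * |A.det| ^ 2 := by
    rw [Matrix.det_smul, Matrix.det_mul, Matrix.det_transpose, Fintype.card_fin, sq_abs]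
    ring
  have hsqrt : √((2 * π * s) ^ d) = (2 * π * s) ^ ((d : ℝ) / 2) := by
    rw [sqrt_eq_rpow, ← rpow_natCast, ← rpow_mul (by positivity)]
    ring_nf
  have hinv : |A.det|⁻¹ ≤ L ^ d := by
    rw [← abs_inv, ← Ring.inverse_eq_inv', ← Matrix.det_nonsing_inv]
    exact (abs_det_le_matOpNorm_pow _).trans (pow_le_pow_left₀ (norm_nonneg _) hAL d)
  rw [sqrt_inv, hdet, sqrt_mul (by positivity), sqrt_sq (abs_nonneg _), hsqrt, mul_inv, mul_comm]
  gcongr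

noncomputable def gaussianDensity (m : EuclideanSpace ℝ (Fin d)) (Γ : Matrix (Fin d) (Fin d) ℝ)
    (z : EuclideanSpace ℝ (Fin d)) : ℝ :=
  √((2 * π) ^ d * Γ.det)⁻¹ * exp (-⟪z - m, Matrix.toEuclideanLin Γ⁻¹ (z - m)⟫ / 2)

lemma gaussianMeasure_eq_withDensity (m : EuclideanSpace ℝ (Fin d))
    (Γ : Matrix (Fin d) (Fin d) ℝ) :
    gaussianMeasure m Γ = volume.withDensity fun z => ENNReal.ofReal (gaussianDensity m Γ z) :=
  rfl

lemma gaussianDensity_nonneg (m : EuclideanSpace ℝ (Fin d)) (Γ : Matrix (Fin d) (Fin d) ℝ)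
    (z : EuclideanSpace ℝ (Fin d)) : 0 ≤ gaussianDensity m Γ z := by
  unfold gaussianDensity
  positivity

lemma continuous_gaussianDensity (m : EuclideanSpace ℝ (Fin d)) (Γ : Matrix (Fin d) (Fin d) ℝ) :
    Continuous (gaussianDensity m Γ) := by
  have : Continuous (Matrix.toEuclideanLin Γ⁻¹) := LinearMap.continuous_of_finiteDimensional _
  unfold gaussianDensity
  fun_prop

lemma gaussianDensity_smul_mul_transpose_le (m : EuclideanSpace ℝ (Fin d))
    {A : Matrix (Fin d) (Fin d) ℝ} (hA : IsUnit A) {s L : ℝ} (hs : 0 < s) (hL : 0 < L)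
    (hAL : matOpNorm A ≤ L) (hAinvL : matOpNorm A⁻¹ ≤ L) (z : EuclideanSpace ℝ (Fin d)) :
    gaussianDensity m (s • (A * A.transpose)) z ≤
      L ^ d * ((2 * π * s) ^ ((d : ℝ) / 2))⁻¹ * exp (-(2 * s * L ^ 2)⁻¹ * ‖z - m‖ ^ 2) := by
  have hquad := sq_norm_div_le_inner_toEuclideanLin_inv_smul_mul_transpose hA hs hL hAL (z - m)
  unfold gaussianDensity
  gcongr
  · exact sqrt_inv_two_pi_pow_mul_det_le A hs hAinvL
  · rw [neg_mul, neg_div, neg_le_neg_iff]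
    calc (2 * s * L ^ 2)⁻¹ * ‖z - m‖ ^ 2 = ‖z - m‖ ^ 2 / (s * L ^ 2) / 2 := by field_simp
      _ ≤ _ := by gcongr

/-- The factors come from `gaussianDensity_smul_mul_transpose_le`, from
`‖w‖ ^ q ≤ (2 q s L²) ^ (q / 2) exp (‖w‖² / (4 s L²))`, and from
`∫ exp (-‖w‖² / (4 s L²)) = (4 π s L²) ^ (d / 2)`; the powers of `s` other than `s ^ (q / 2)`
cancel. -/
noncomputable def gaussianMomentBound (d : ℕ) (L q : ℝ) : ℝ :=
  L ^ d * (2 * L ^ 2) ^ ((d : ℝ) / 2) * (2 * q * L ^ 2) ^ (q / 2)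

lemma lintegral_enorm_sub_rpow_gaussianMeasure_le (m : EuclideanSpace ℝ (Fin d))
    {A : Matrix (Fin d) (Fin d) ℝ} (hA : IsUnit A) {s L q : ℝ} (hs : 0 < s) (hL : 0 < L)
    (hAL : matOpNorm A ≤ L) (hAinvL : matOpNorm A⁻¹ ≤ L) (hq : 0 ≤ q) :
    ∫⁻ z, ‖z - m‖ₑ ^ q ∂gaussianMeasure m (s • (A * A.transpose)) ≤
      ENNReal.ofReal (gaussianMomentBound d L q * s ^ (q / 2)) := by
  set K := L ^ d * ((2 * π * s) ^ ((d : ℝ) / 2))⁻¹ with hK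
  set β := (2 * s * L ^ 2)⁻¹ with hβ_def
  have hβ : 0 < β := by positivity
  calc ∫⁻ z, ‖z - m‖ₑ ^ q ∂gaussianMeasure m (s • (A * A.transpose))
      ≤ ∫⁻ z, ENNReal.ofReal (gaussianDensity m (s • (A * A.transpose)) z) * ‖z - m‖ₑ ^ q := by
        rw [gaussianMeasure_eq_withDensity]
        exact lintegral_withDensity_le_lintegral_mul _
          (continuous_gaussianDensity _ _).measurable.ennreal_ofReal _
    _ ≤ ∫⁻ z, ENNReal.ofReal K * ENNReal.ofReal (‖z - m‖ ^ q * exp (-β * ‖z - m‖ ^ 2)) := by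
        refine lintegral_mono fun z => ?_
        rw [← ofReal_norm, ENNReal.ofReal_rpow_of_nonneg (norm_nonneg _) hq,
          ← ENNReal.ofReal_mul (gaussianDensity_nonneg _ _ _), ← ENNReal.ofReal_mul (by positivity)]
        refine ENNReal.ofReal_le_ofReal ?_
        calc _ ≤ K * exp (-β * ‖z - m‖ ^ 2) * ‖z - m‖ ^ q := by
              gcongr
              exact gaussianDensity_smul_mul_transpose_le m hA hs hL hAL hAinvL z
          _ = _ := by ring
    _ = ENNReal.ofReal K * ∫⁻ v, ENNReal.ofReal (‖v‖ ^ q * exp (-β * ‖v‖ ^ 2)) := by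
        rw [lintegral_const_mul' _ _ ENNReal.ofReal_ne_top,
          lintegral_sub_right_eq_self (fun v => ENNReal.ofReal (‖v‖ ^ q * exp (-β * ‖v‖ ^ 2))) m]
    _ ≤ ENNReal.ofReal K * ENNReal.ofReal ((q / β) ^ (q / 2) * (2 * π / β) ^ ((d : ℝ) / 2)) := by
        gcongr
        simpa using lintegral_rpow_norm_mul_exp_neg_mul_sq_le
          (V := EuclideanSpace ℝ (Fin d)) hβ hq
    _ = ENNReal.ofReal (gaussianMomentBound d L q * s ^ (q / 2)) := by
        rw [← ENNReal.ofReal_mul (by positivity)]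
        congr 1
        have hqβ : q / β = 2 * q * L ^ 2 * s := by rw [hβ_def]; field_simp
        have hπβ : 2 * π / β = 2 * π * s * (2 * L ^ 2) := by rw [hβ_def]; field_simp
        rw [hK, hqβ, hπβ, mul_rpow (x := 2 * q * L ^ 2) (by positivity) hs.le,
          mul_rpow (x := 2 * π * s) (by positivity) (by positivity), gaussianMomentBound]
        field_simp

lemma gaussianMomentBound_pos {L q : ℝ} (hL : 0 < L) (hq : 0 ≤ q) :
    0 < gaussianMomentBound d L q := by
  unfold gaussianMomentBound
  rcases hq.eq_or_lt with rfl | hq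
  · simp only [zero_div, rpow_zero, mul_one]; positivity
  · positivity

lemma integral_norm_sub_rpow_gaussianMeasure_le (x m : EuclideanSpace ℝ (Fin d))
    {A : Matrix (Fin d) (Fin d) ℝ} (hA : IsUnit A) {s L p R : ℝ} (hs : 0 < s) (hL : 0 < L)
    (hAL : matOpNorm A ≤ L) (hAinvL : matOpNorm A⁻¹ ≤ L) (hp : 1 ≤ p) (hR : 0 ≤ R)
    (hmx : ‖m - x‖ ≤ R * √s) :
    ∫ z, ‖z - x‖ ^ p ∂gaussianMeasure m (s • (A * A.transpose)) ≤
      2 ^ (p - 1) * (gaussianMomentBound d L p + R ^ p * gaussianMomentBound d L 0) *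
        s ^ (p / 2) := by
  have hp0 : 0 ≤ p := by linarith
  have hM0 := (gaussianMomentBound_pos (d := d) hL le_rfl).le
  have hMp := (gaussianMomentBound_pos (d := d) hL hp0).le
  have hmx_p : ‖m - x‖ₑ ^ p ≤ ENNReal.ofReal (R ^ p * s ^ (p / 2)) := by
    rw [← ofReal_norm, ENNReal.ofReal_rpow_of_nonneg (norm_nonneg _) hp0]
    refine ENNReal.ofReal_le_ofReal ?_
    calc ‖m - x‖ ^ p ≤ (R * √s) ^ p := by gcongr
      _ = R ^ p * s ^ (p / 2) := by
        rw [mul_rpow hR (sqrt_nonneg s), sqrt_eq_rpow, ← rpow_mul hs.le]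
        ring_nf
  have hmass : gaussianMeasure m (s • (A * A.transpose)) Set.univ ≤
      ENNReal.ofReal (gaussianMomentBound d L 0) := by
    simpa using lintegral_enorm_sub_rpow_gaussianMeasure_le m hA hs hL hAL hAinvL le_rfl
  rw [integral_eq_lintegral_of_nonneg_ae (ae_of_all _ fun _ => by positivity)
    (by fun_prop (disch := exact hp0) : Continuous fun z => ‖z - x‖ ^ p).aestronglyMeasurable]
  refine ENNReal.toReal_le_of_le_ofReal (by positivity) ?_
  calc ∫⁻ z, ENNReal.ofReal (‖z - x‖ ^ p) ∂_ = ∫⁻ z, ‖z - x‖ₑ ^ p ∂_ :=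
        lintegral_congr fun z => by
          rw [← ofReal_norm, ENNReal.ofReal_rpow_of_nonneg (norm_nonneg _) hp0]
    _ ≤ _ := lintegral_enorm_sub_rpow_le _ x m hp
    _ ≤ 2 ^ (p - 1) * (ENNReal.ofReal (gaussianMomentBound d L p * s ^ (p / 2)) +
          ENNReal.ofReal (R ^ p * s ^ (p / 2)) * ENNReal.ofReal (gaussianMomentBound d L 0)) := by
        gcongr
        exact lintegral_enorm_sub_rpow_gaussianMeasure_le m hA hs hL hAL hAinvL hp0
    _ = _ := by
        rw [← ENNReal.ofReal_mul (by positivity), ← ENNReal.ofReal_add (by positivity)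
          (by positivity), ← ENNReal.ofReal_ofNat 2, ENNReal.ofReal_rpow_of_pos two_pos,
          ← ENNReal.ofReal_mul (by positivity)]
        ring_nf

end

lemma div_one_add_rpow_mul_mul_le_sqrt_mul {s η α N t : ℝ} (hs : 0 < s) (hsη : s ≤ η)
    (hη1 : η ≤ 1) (hα : α ≤ 1 / 2) (hN : 0 ≤ N) (ht : 0 ≤ t) :
    s / (1 + η ^ α * N) * (1 + t * N) ≤ √s * (1 + t) := by
  have hsqrt_le : √s ≤ η ^ α :=
    calc √s ≤ √η := sqrt_le_sqrt hsη
      _ = η ^ (1 / 2 : ℝ) := sqrt_eq_rpow η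
      _ ≤ η ^ α := rpow_le_rpow_of_exponent_ge (hs.trans_le hsη) hη1 hα
  have hη : 0 < η := hs.trans_le hsη
  have hsq : √s * √s = s := mul_self_sqrt hs.le
  have hs_le : s ≤ √s := by nlinarith [sqrt_nonneg s, hsη.trans hη1]
  rw [div_mul_eq_mul_div, div_le_iff₀ (by positivity)]
  calc s * (1 + t * N) ≤ √s * (1 + t) + √s * √s * (N * (1 + t)) := by
        rw [hsq]; nlinarith [mul_nonneg (sqrt_nonneg s) ht, mul_nonneg hs.le hN]
    _ ≤ √s * (1 + t) * (1 + η ^ α * N) := by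
        nlinarith [mul_nonneg (mul_nonneg (mul_nonneg (sqrt_nonneg s) (by linarith : 0 ≤ 1 + t))
          hN) (sub_nonneg.2 hsqrt_le)]

lemma le_one_add_rpow {t e : ℝ} (ht : 0 ≤ t) (he : 1 ≤ e) : t ≤ 1 + t ^ e := by
  rcases le_total t 1 with h | h
  · linarith [rpow_nonneg ht e]
  · linarith [self_le_rpow_of_one_le h he]

lemma norm_div_one_add_rpow_mul_smul_le {E : Type*} [SeminormedAddCommGroup E]
    [NormedSpace ℝ E] {v : E} {s η α N L t e : ℝ} (hs : 0 < s) (hsη : s ≤ η) (hη1 : η ≤ 1)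
    (hα : α ≤ 1 / 2) (hN : 0 ≤ N) (hL : 0 ≤ L) (ht : 0 ≤ t) (he : 1 ≤ e)
    (hv : ‖v‖ ≤ L * (1 + t * N)) :
    ‖(s / (1 + η ^ α * N)) • v‖ ≤ 2 * L * (1 + t ^ e) * √s := by
  have hη : 0 < η := hs.trans_le hsη
  have hstep := div_one_add_rpow_mul_mul_le_sqrt_mul hs hsη hη1 hα hN ht
  have ht_le := le_one_add_rpow ht he
  rw [norm_smul, norm_of_nonneg (by positivity)]
  calc s / (1 + η ^ α * N) * ‖v‖ ≤ L * (s / (1 + η ^ α * N) * (1 + t * N)) := by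
        rw [mul_left_comm]; gcongr
    _ ≤ L * (√s * (1 + t)) := by gcongr
    _ ≤ 2 * L * (1 + t ^ e) * √s := by
        nlinarith [mul_nonneg (mul_nonneg hL (sqrt_nonneg s))
          (by linarith [rpow_nonneg ht e] : 0 ≤ 1 + 2 * t ^ e - t)]

theorem stmt14_general {d : ℕ} (r L₁ L₂ : ℝ) (hr : 0 ≤ r) (hL₁ : 0 < L₁)
    (hL₂ : 0 < L₂)
    (b : EuclideanSpace ℝ (Fin d) → EuclideanSpace ℝ (Fin d))
    (σ : EuclideanSpace ℝ (Fin d) → Matrix (Fin d) (Fin d) ℝ)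
    -- drift assumption
    (hgrowth : ∀ x, ‖b x‖ ≤ L₁ * (1 + ‖x‖ * ‖fderiv ℝ b x‖))
    -- diffusion assumption (σ viewed as a map into linear operators on ℝ^d)
    (hσinv : ∀ x, IsUnit (σ x))
    (hσbd : ∀ x, matOpNorm (σ x) ≤ L₂)
    (hσinvbd : ∀ x, matOpNorm (σ x)⁻¹ ≤ L₂) :
    ∀ p : ℝ, 1 ≤ p → ∃ C > 0,
      ∀ (x : EuclideanSpace ℝ (Fin d)) (α η s : ℝ),
        0 < α → α < 1 / 2 → 0 < η → η ≤ 1 → 0 < s → s ≤ η →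
        ∫ z, ‖z - x‖ ^ p
            ∂(gaussianMeasure (x + (s / (1 + η ^ α * ‖fderiv ℝ b x‖)) • b x)
              (s • (σ x * (σ x).transpose)))
          ≤ C * s ^ (p / 2) * (1 + ‖x‖ ^ (r + 1)) ^ p := by
  intro p hp
  have hp0 : 0 ≤ p := by linarith
  have hMp := gaussianMomentBound_pos (d := d) hL₂ hp0
  have hM0 := gaussianMomentBound_pos (d := d) hL₂ le_rfl
  refine ⟨2 ^ (p - 1) * (gaussianMomentBound d L₂ p + (2 * L₁) ^ p * gaussianMomentBound d L₂ 0),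
    by positivity, fun x α η s _ hα _ hη1 hs hsη => ?_⟩
  set B := ‖x‖ ^ (r + 1)
  have hmean : ‖x + (s / (1 + η ^ α * ‖fderiv ℝ b x‖)) • b x - x‖ ≤ 2 * L₁ * (1 + B) * √s := by
    rw [add_sub_cancel_left]
    exact norm_div_one_add_rpow_mul_smul_le hs hsη hη1 hα.le (norm_nonneg _) hL₁.le
      (norm_nonneg x) (by linarith) (hgrowth x)
  have hB_p : 1 ≤ (1 + B) ^ p := one_le_rpow (by linarith [rpow_nonneg (norm_nonneg x) (r + 1)]) hp0
  calc _ ≤ 2 ^ (p - 1) * (gaussianMomentBound d L₂ p +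
          (2 * L₁ * (1 + B)) ^ p * gaussianMomentBound d L₂ 0) * s ^ (p / 2) :=
        integral_norm_sub_rpow_gaussianMeasure_le x _ (hσinv x) hs hL₂ (hσbd x) (hσinvbd x) hp
          (by positivity) hmean
    _ ≤ 2 ^ (p - 1) * (gaussianMomentBound d L₂ p * (1 + B) ^ p +
          (2 * L₁) ^ p * (1 + B) ^ p * gaussianMomentBound d L₂ 0) * s ^ (p / 2) := by
        rw [mul_rpow (by positivity) (by positivity)]
        gcongr
        exact le_mul_of_one_le_right hMp.le hB_p
    _ = _ := by ring

theorem stmt14 {d : ℕ} (r L₁ lam L₂ : ℝ) (hr : 0 ≤ r) (hL₁ : 0 < L₁) (hlam : 0 < lam)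
    (hL₂ : 0 < L₂)
    (b : EuclideanSpace ℝ (Fin d) → EuclideanSpace ℝ (Fin d))
    (σ : EuclideanSpace ℝ (Fin d) → Matrix (Fin d) (Fin d) ℝ)
    -- drift assumption
    (hb : ContDiff ℝ 1 b)
    (hdissip : ∀ x, ⟪x, b x⟫ ≤ L₁ - lam * ‖x‖ ^ (r + 2))
    (hgrowth : ∀ x, ‖b x‖ ≤ L₁ * (1 + ‖x‖ * ‖fderiv ℝ b x‖))
    (hlip : ∀ x y, ‖b x - b y‖ ≤ L₁ * (1 + ‖x‖ ^ r + ‖y‖ ^ r) * ‖x - y‖)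
    -- diffusion assumption (σ viewed as a map into linear operators on ℝ^d)
    (hσ : ContDiff ℝ 2
      (fun y => LinearMap.toContinuousLinearMap (Matrix.toEuclideanLin (σ y))))
    (hσinv : ∀ x, IsUnit (σ x))
    (hσbd : ∀ x, matOpNorm (σ x) ≤ L₂)
    (hσinvbd : ∀ x, matOpNorm (σ x)⁻¹ ≤ L₂)
    (hσder : ∀ x, ‖fderiv ℝ
      (fun y => LinearMap.toContinuousLinearMap (Matrix.toEuclideanLin (σ y))) x‖ ≤ L₂)
    (hσder2 : ∀ x, ‖iteratedFDeriv ℝ 2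
      (fun y => LinearMap.toContinuousLinearMap (Matrix.toEuclideanLin (σ y))) x‖ ≤ L₂) :
    ∀ p : ℝ, 1 ≤ p → ∃ C > 0,
      ∀ (x : EuclideanSpace ℝ (Fin d)) (α η s : ℝ),
        0 < α → α < 1 / 2 → 0 < η → η ≤ 1 → 0 < s → s ≤ η →
        ∫ z, ‖z - x‖ ^ p
            ∂(gaussianMeasure (x + (s / (1 + η ^ α * ‖fderiv ℝ b x‖)) • b x)
              (s • (σ x * (σ x).transpose)))
          ≤ C * s ^ (p / 2) * (1 + ‖x‖ ^ (r + 1)) ^ p :=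
  stmt14_general r L₁ L₂ hr hL₁ hL₂ b σ hgrowth hσinv hσbd hσinvbd
end

section
/- Let b : ℝ^d → ℝ^d and suppose there are constants r ≥ 0, L₁ > 0, λ > 0 such that ⟨x, b(x)⟩ ≤ L₁ − λ|x|^{r+2} and |b(x) − b(y)| ≤ L₁(1 + |x|^r + |y|^r)|x − y| for all x, y ∈ ℝ^d. Then there exists a constant C > 0 such that ⟨y − x, b(y) − b(x)⟩ ≤ C(1 + |x|^{r+2}) for all x, y ∈ ℝ^d. -/
set_option maxHeartbeats 1000000


open scoped RealInnerProductSpace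

private lemma rpow_succ' {a r : ℝ} (ha : 0 ≤ a) (hr : 0 ≤ r) :
    a ^ (r + 2) = a * a ^ (r + 1) := by
  rw [show r + 2 = 1 + (r + 1) by ring, Real.rpow_add' ha (by linarith), Real.rpow_one]

private lemma le_one_add_rpow_s17 {a r : ℝ} (ha : 0 ≤ a) (hr : 0 ≤ r) :
    a ≤ 1 + a ^ (r + 2) := by
  rcases le_total a 1 with h | h
  · have := Real.rpow_nonneg ha (r + 2)
    linarith
  · have h2 : a ^ (1 : ℝ) ≤ a ^ (r + 2) :=
      Real.rpow_le_rpow_of_exponent_le h (by linarith)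
    rw [Real.rpow_one] at h2
    linarith

private lemma sq_le_one_add_rpow {a r : ℝ} (ha : 0 ≤ a) (hr : 0 ≤ r) :
    a * a ≤ 1 + a ^ (r + 2) := by
  rcases le_total a 1 with h | h
  · have := Real.rpow_nonneg ha (r + 2)
    nlinarith
  · have h2 : a ^ (2 : ℝ) ≤ a ^ (r + 2) :=
      Real.rpow_le_rpow_of_exponent_le h (by linarith)
    have h3 : a ^ (2 : ℝ) = a * a := by
      rw [show (2 : ℝ) = 1 + 1 by norm_num, Real.rpow_add' ha (by norm_num), Real.rpow_one]
    rw [h3] at h2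
    linarith

private lemma cross1 {a b c r : ℝ} (ha : 0 ≤ a) (hb : 0 ≤ b) (hc : 1 ≤ c) (hr : 0 ≤ r) :
    a * b ^ (r + 1) ≤ c ^ (r + 1) * a ^ (r + 2) + b ^ (r + 2) / c := by
  have hc0 : (0 : ℝ) < c := lt_of_lt_of_le one_pos hc
  have hbQ : 0 ≤ b ^ (r + 2) := Real.rpow_nonneg hb _
  have haP : 0 ≤ a ^ (r + 2) := Real.rpow_nonneg ha _
  have hcP : 0 ≤ c ^ (r + 1) := Real.rpow_nonneg hc0.le _
  rcases le_total b (c * a) with h | h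
  · have h1 : b ^ (r + 1) ≤ (c * a) ^ (r + 1) := Real.rpow_le_rpow hb h (by linarith)
    rw [Real.mul_rpow hc0.le ha] at h1
    have h2 : a * b ^ (r + 1) ≤ a * (c ^ (r + 1) * a ^ (r + 1)) :=
      mul_le_mul_of_nonneg_left h1 ha
    have h3 : a * (c ^ (r + 1) * a ^ (r + 1)) = c ^ (r + 1) * (a * a ^ (r + 1)) := by ring
    rw [h3, ← rpow_succ' ha hr] at h2
    have : 0 ≤ b ^ (r + 2) / c := div_nonneg hbQ hc0.le
    linarith
  · have h1 : a ≤ b / c := by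
      rw [le_div_iff₀ hc0]; nlinarith
    have h2 : a * b ^ (r + 1) ≤ (b / c) * b ^ (r + 1) :=
      mul_le_mul_of_nonneg_right h1 (Real.rpow_nonneg hb _)
    have h3 : (b / c) * b ^ (r + 1) = (b * b ^ (r + 1)) / c := by ring
    rw [h3, ← rpow_succ' hb hr] at h2
    nlinarith

private lemma cross2 {a b c r : ℝ} (ha : 0 ≤ a) (hb : 0 ≤ b) (hc : 1 ≤ c) (hr : 0 ≤ r) :
    b * a ^ (r + 1) ≤ c * a ^ (r + 2) + b ^ (r + 2) / c := by
  have hc0 : (0 : ℝ) < c := lt_of_lt_of_le one_pos hc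
  have hbQ : 0 ≤ b ^ (r + 2) := Real.rpow_nonneg hb _
  have haP : 0 ≤ a ^ (r + 2) := Real.rpow_nonneg ha _
  rcases le_total b (c * a) with h | h
  · have h2 : b * a ^ (r + 1) ≤ (c * a) * a ^ (r + 1) :=
      mul_le_mul_of_nonneg_right h (Real.rpow_nonneg ha _)
    have h3 : (c * a) * a ^ (r + 1) = c * (a * a ^ (r + 1)) := by ring
    rw [h3, ← rpow_succ' ha hr] at h2
    have : 0 ≤ b ^ (r + 2) / c := div_nonneg hbQ hc0.le
    linarith
  · have h1 : a ≤ b / c := by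
      rw [le_div_iff₀ hc0]; nlinarith
    have h4 : a ^ (r + 1) ≤ (b / c) ^ (r + 1) := Real.rpow_le_rpow ha h1 (by linarith)
    rw [Real.div_rpow hb hc0.le] at h4
    have hcc : c ≤ c ^ (r + 1) := by
      have := Real.rpow_le_rpow_of_exponent_le hc (show (1 : ℝ) ≤ r + 1 by linarith)
      rwa [Real.rpow_one] at this
    have h5 : b ^ (r + 1) / c ^ (r + 1) ≤ b ^ (r + 1) / c := by
      gcongr
    have h6 : b * a ^ (r + 1) ≤ b * (b ^ (r + 1) / c) :=
      mul_le_mul_of_nonneg_left (le_trans h4 h5) hb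
    have h7 : b * (b ^ (r + 1) / c) = (b * b ^ (r + 1)) / c := by ring
    rw [h7, ← rpow_succ' hb hr] at h6
    have h8 : 0 ≤ c * a ^ (r + 2) := mul_nonneg hc0.le haP
    linarith

private lemma cross3 {a b c r : ℝ} (ha : 0 ≤ a) (hb : 0 ≤ b) (hc : 1 ≤ c) (hr : 0 ≤ r) :
    a * b ≤ c * (1 + a ^ (r + 2)) + (1 + b ^ (r + 2)) / c := by
  have hc0 : (0 : ℝ) < c := lt_of_lt_of_le one_pos hc
  have hbQ : 0 ≤ b ^ (r + 2) := Real.rpow_nonneg hb _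
  have haP : 0 ≤ a ^ (r + 2) := Real.rpow_nonneg ha _
  rcases le_total b (c * a) with h | h
  · have h2 : a * b ≤ a * (c * a) := mul_le_mul_of_nonneg_left h ha
    have h3 : a * a ≤ 1 + a ^ (r + 2) := sq_le_one_add_rpow ha hr
    have h4 : a * (c * a) = c * (a * a) := by ring
    have h5 : c * (a * a) ≤ c * (1 + a ^ (r + 2)) := mul_le_mul_of_nonneg_left h3 hc0.le
    have h6 : 0 ≤ (1 + b ^ (r + 2)) / c := div_nonneg (by linarith) hc0.le
    linarith [h4 ▸ h2]
  · have h1 : a ≤ b / c := by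
      rw [le_div_iff₀ hc0]; nlinarith
    have h2 : a * b ≤ (b / c) * b := mul_le_mul_of_nonneg_right h1 hb
    have h3 : b * b ≤ 1 + b ^ (r + 2) := sq_le_one_add_rpow hb hr
    have h4 : (b / c) * b = (b * b) / c := by ring
    have h5 : (b * b) / c ≤ (1 + b ^ (r + 2)) / c := by gcongr
    have h6 : 0 ≤ c * (1 + a ^ (r + 2)) := mul_nonneg hc0.le (by linarith)
    linarith [h4 ▸ h2]

private lemma cross4 {m b c r : ℝ} (hm : 0 ≤ m) (hb : 0 ≤ b) (hc : 1 ≤ c) (hr : 0 ≤ r) :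
    m * b ≤ m * c + (m / c) * b ^ (r + 2) := by
  have hc0 : (0 : ℝ) < c := lt_of_lt_of_le one_pos hc
  have hbQ : 0 ≤ b ^ (r + 2) := Real.rpow_nonneg hb _
  rcases le_total b c with h | h
  · have : m * b ≤ m * c := mul_le_mul_of_nonneg_left h hm
    have h2 : 0 ≤ (m / c) * b ^ (r + 2) := mul_nonneg (div_nonneg hm hc0.le) hbQ
    linarith
  · have hb1 : 1 ≤ b := le_trans hc h
    have h1 : c ^ (r + 1) ≤ b ^ (r + 1) := Real.rpow_le_rpow hc0.le h (by linarith)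
    have h2 : c ≤ c ^ (r + 1) := by
      have := Real.rpow_le_rpow_of_exponent_le hc (show (1 : ℝ) ≤ r + 1 by linarith)
      rwa [Real.rpow_one] at this
    have h3 : b * c ≤ b * b ^ (r + 1) := mul_le_mul_of_nonneg_left (le_trans h2 h1) hb
    rw [← rpow_succ' hb hr] at h3
    have h4 : b ≤ b ^ (r + 2) / c := by
      rw [le_div_iff₀ hc0]; linarith
    have h5 : m * b ≤ m * (b ^ (r + 2) / c) := mul_le_mul_of_nonneg_left h4 hm
    have h6 : m * (b ^ (r + 2) / c) = (m / c) * b ^ (r + 2) := by ring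
    have h7 : 0 ≤ m * c := mul_nonneg hm hc0.le
    linarith [h6 ▸ h5]

theorem stmt17 {d : ℕ} (b : EuclideanSpace ℝ (Fin d) → EuclideanSpace ℝ (Fin d))
    (r L₁ lam : ℝ) (hr : 0 ≤ r) (hL₁ : 0 < L₁) (hlam : 0 < lam)
    (hdissip : ∀ x, ⟪x, b x⟫ ≤ L₁ - lam * ‖x‖ ^ (r + 2))
    (hlip : ∀ x y, ‖b x - b y‖ ≤ L₁ * (1 + ‖x‖ ^ r + ‖y‖ ^ r) * ‖x - y‖) :
    ∃ C > 0, ∀ x y, ⟪y - x, b y - b x⟫ ≤ C * (1 + ‖x‖ ^ (r + 2)) := by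
  set M : ℝ := ‖b 0‖ with hM
  have hM0 : 0 ≤ M := norm_nonneg _
  set c : ℝ := 1 + (M + 6 * L₁) / lam with hcdef
  have hc : 1 ≤ c := by
    have : 0 ≤ (M + 6 * L₁) / lam := div_nonneg (by linarith) hlam.le
    rw [hcdef]; linarith
  have hc0 : (0 : ℝ) < c := lt_of_lt_of_le one_pos hc
  have hkey : (M + 6 * L₁) / c ≤ lam := by
    rw [div_le_iff₀ hc0, hcdef, mul_add, mul_one, mul_div_cancel₀ _ hlam.ne']
    linarith
  have hcr : 0 ≤ c ^ (r + 1) := Real.rpow_nonneg hc0.le _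
  -- norm growth bound
  have hnorm : ∀ z, ‖b z‖ ≤ M + 2 * L₁ * ‖z‖ + L₁ * ‖z‖ ^ (r + 1) := by
    intro z
    have h := hlip z 0
    rw [norm_zero, sub_zero] at h
    have h0r : (0 : ℝ) ^ r ≤ 1 := Real.rpow_le_one le_rfl zero_le_one hr
    have hzr : 0 ≤ ‖z‖ ^ r := Real.rpow_nonneg (norm_nonneg z) r
    have h1 : ‖b z‖ - M ≤ ‖b z - b 0‖ := norm_sub_norm_le (b z) (b 0)
    have h2 : (1 + ‖z‖ ^ r + (0 : ℝ) ^ r) * ‖z‖ ≤ (2 + ‖z‖ ^ r) * ‖z‖ :=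
      mul_le_mul_of_nonneg_right (by linarith) (norm_nonneg z)
    have h3 : L₁ * (1 + ‖z‖ ^ r + (0 : ℝ) ^ r) * ‖z‖ ≤ L₁ * ((2 + ‖z‖ ^ r) * ‖z‖) := by
      calc L₁ * (1 + ‖z‖ ^ r + (0 : ℝ) ^ r) * ‖z‖
          = L₁ * ((1 + ‖z‖ ^ r + (0 : ℝ) ^ r) * ‖z‖) := by ring
        _ ≤ L₁ * ((2 + ‖z‖ ^ r) * ‖z‖) := mul_le_mul_of_nonneg_left h2 hL₁.le
    have hzz : ‖z‖ ^ r * ‖z‖ = ‖z‖ ^ (r + 1) := by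
      rw [Real.rpow_add' (norm_nonneg z) (by linarith : r + 1 ≠ 0), Real.rpow_one]
    have h4 : L₁ * ((2 + ‖z‖ ^ r) * ‖z‖) = 2 * L₁ * ‖z‖ + L₁ * ‖z‖ ^ (r + 1) := by
      rw [← hzz]; ring
    linarith
  have hCpos : 0 < 6 * L₁ + 2 * M + M * c + 8 * L₁ * c + L₁ * c ^ (r + 1) + L₁ * c := by
    have h1 := mul_nonneg hM0 hc0.le
    have h2 := mul_nonneg hL₁.le hc0.le
    have h3 := mul_nonneg hL₁.le hcr
    linarith
  refine ⟨6 * L₁ + 2 * M + M * c + 8 * L₁ * c + L₁ * c ^ (r + 1) + L₁ * c, hCpos, ?_⟩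
  intro x y
  set A : ℝ := ‖x‖ with hA
  set B : ℝ := ‖y‖ with hB
  have hA0 : 0 ≤ A := norm_nonneg x
  have hB0 : 0 ≤ B := norm_nonneg y
  have hP : 0 ≤ A ^ (r + 2) := Real.rpow_nonneg hA0 _
  have hQ : 0 ≤ B ^ (r + 2) := Real.rpow_nonneg hB0 _
  have hexp : ⟪y - x, b y - b x⟫ = ⟪y, b y⟫ + ⟪x, b x⟫ - ⟪x, b y⟫ - ⟪y, b x⟫ := by
    simp only [inner_sub_left, inner_sub_right]
    ring
  have t1 : ⟪y, b y⟫ ≤ L₁ - lam * B ^ (r + 2) := hdissip y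
  have t2 : ⟪x, b x⟫ ≤ L₁ - lam * A ^ (r + 2) := hdissip x
  have t3 : -⟪x, b y⟫ ≤ A * ‖b y‖ := by
    have h1 := abs_real_inner_le_norm x (b y)
    have h2 := neg_abs_le (⟪x, b y⟫)
    linarith
  have t4 : -⟪y, b x⟫ ≤ B * ‖b x‖ := by
    have h1 := abs_real_inner_le_norm y (b x)
    have h2 := neg_abs_le (⟪y, b x⟫)
    linarith
  have t5 : A * ‖b y‖ ≤ M * A + 2 * L₁ * (A * B) + L₁ * (A * B ^ (r + 1)) := by
    have := mul_le_mul_of_nonneg_left (hnorm y) hA0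
    nlinarith [this]
  have t6 : B * ‖b x‖ ≤ M * B + 2 * L₁ * (A * B) + L₁ * (B * A ^ (r + 1)) := by
    have := mul_le_mul_of_nonneg_left (hnorm x) hB0
    nlinarith [this]
  -- cross bounds
  have e1 : A * B ^ (r + 1) ≤ c ^ (r + 1) * A ^ (r + 2) + B ^ (r + 2) / c :=
    cross1 hA0 hB0 hc hr
  have e2 : B * A ^ (r + 1) ≤ c * A ^ (r + 2) + B ^ (r + 2) / c :=
    cross2 hA0 hB0 hc hr
  have e3 : A * B ≤ c * (1 + A ^ (r + 2)) + (1 + B ^ (r + 2)) / c :=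
    cross3 hA0 hB0 hc hr
  have e4 : M * B ≤ M * c + (M / c) * B ^ (r + 2) := cross4 hM0 hB0 hc hr
  have e5 : M * A ≤ M * (1 + A ^ (r + 2)) :=
    mul_le_mul_of_nonneg_left (le_one_add_rpow_s17 hA0 hr) hM0
  -- scaled versions
  have g3 : 4 * L₁ * (A * B) ≤ 4 * L₁ * (c * (1 + A ^ (r + 2)) + (1 + B ^ (r + 2)) / c) :=
    mul_le_mul_of_nonneg_left e3 (by linarith)
  have g4 : L₁ * (A * B ^ (r + 1)) ≤ L₁ * (c ^ (r + 1) * A ^ (r + 2) + B ^ (r + 2) / c) :=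
    mul_le_mul_of_nonneg_left e1 hL₁.le
  have g5 : L₁ * (B * A ^ (r + 1)) ≤ L₁ * (c * A ^ (r + 2) + B ^ (r + 2) / c) :=
    mul_le_mul_of_nonneg_left e2 hL₁.le
  -- key cancellation of the Q := B^(r+2) terms
  have g6 : (M / c) * B ^ (r + 2) + 4 * L₁ * ((1 + B ^ (r + 2)) / c)
      + L₁ * (B ^ (r + 2) / c) + L₁ * (B ^ (r + 2) / c)
      ≤ lam * B ^ (r + 2) + 4 * L₁ := by
    have h1 : (M / c) * B ^ (r + 2) + 4 * L₁ * ((1 + B ^ (r + 2)) / c)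
        + L₁ * (B ^ (r + 2) / c) + L₁ * (B ^ (r + 2) / c)
        = ((M + 6 * L₁) / c) * B ^ (r + 2) + (4 * L₁) / c := by
      field_simp
      ring
    rw [h1]
    have h2 : ((M + 6 * L₁) / c) * B ^ (r + 2) ≤ lam * B ^ (r + 2) :=
      mul_le_mul_of_nonneg_right hkey hQ
    have h3 : (4 * L₁) / c ≤ 4 * L₁ := div_le_self (by linarith) hc
    linarith
  clear_value M c A B
  -- assemble
  have hfinal : ⟪y - x, b y - b x⟫ ≤
      (2 * L₁ + M + M * c + 4 * L₁ * c + 4 * L₁)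
      + (M + 4 * L₁ * c + L₁ * c ^ (r + 1) + L₁ * c) * A ^ (r + 2) := by
    rw [hexp]
    have hlamP : 0 ≤ lam * A ^ (r + 2) := mul_nonneg hlam.le hP
    linarith [t1, t2, t3, t4, t5, t6, g3, g4, g5, g6, e4, e5]
  linarith [hfinal, hP, mul_nonneg hM0 hP, mul_nonneg (mul_nonneg hL₁.le hc0.le) hP,
    mul_nonneg (mul_nonneg hL₁.le hcr) hP, mul_nonneg (mul_nonneg hM0 hc0.le) hP,
    mul_nonneg hL₁.le hP, mul_nonneg hM0 hc0.le, mul_nonneg hL₁.le hc0.le,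
    mul_nonneg hL₁.le hcr]
end

section
/- Let μ ∈ ℝ^d with μ ≠ 0, let Σ ∈ ℝ^{d×d} be symmetric positive definite, and let η > 0 satisfy η‖Σ‖_op ≤ 1/6. If ξ is a random vector with Gaussian distribution N(μ, ηΣ), then E[ exp( ⟨ξ, μ⟩/|μ| + (3/2)|ξ − μ|² ) ] ≤ (1 − 3η‖Σ‖_op)^{−d/2} exp( η|Σ^{1/2}μ|² / (2(1 − 3η‖Σ‖_op)|μ|²) + |μ| ) ≤ exp( |μ| + (3d + 1) η‖Σ‖_op ). -/
open MeasureTheory Real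
open scoped RealInnerProductSpace

/-- The positive semidefinite square root of a positive semidefinite matrix, as
`Matrix.PosSemidef.sqrt` was defined in the older Mathlib. -/
noncomputable def Matrix.PosSemidef.sqrtOld {n : Type*} [Fintype n] [DecidableEq n]
    {A : Matrix n n ℝ} (hA : A.PosSemidef) : Matrix n n ℝ :=
  (hA.1.eigenvectorUnitary : Matrix n n ℝ) * Matrix.diagonal ((↑) ∘ (√·) ∘ hA.1.eigenvalues) *
    (star hA.1.eigenvectorUnitary : Matrix n n ℝ)

/-!
Write `ξ = μ + Q w` with `Q = √η Σ^{1/2}` and `w` standard Gaussian. The exponent becomes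
`‖μ‖ + ⟪Qμ, w⟫ / ‖μ‖ + (3/2) ‖Q w‖²`, and `‖Q w‖² ≤ η ‖Σ‖ ‖w‖²`, so against the density
`exp (-‖w‖² / 2)` the integrand is dominated by a Gaussian with variance `1 / (1 - 3 η ‖Σ‖)`,
whose integral is explicit. The second bound follows from `-log (1 - x) ≤ 2 x` for `x ≤ 1/2`
and `‖Σ^{1/2} μ‖² ≤ ‖Σ‖ ‖μ‖²`.
-/

section Gaussian

variable {V : Type*} [NormedAddCommGroup V] [InnerProductSpace ℝ V] [FiniteDimensional ℝ V]
  [MeasurableSpace V] [BorelSpace V]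

theorem integrable_rexp_neg_mul_sq_norm_add_inner {b : ℝ} (hb : 0 < b) (w : V) :
    Integrable fun v : V => rexp (-b * ‖v‖ ^ 2 + ⟪w, v⟫) := by
  refine (GaussianFourier.integrable_cexp_neg_mul_sq_norm_add (V := V)
    (b := (b : ℂ)) (by simpa using hb) 1 w).norm.congr (.of_forall fun v => ?_)
  simp [Complex.norm_exp, ← Complex.ofReal_pow]

theorem integral_rexp_neg_mul_sq_norm_add_inner {b : ℝ} (hb : 0 < b) (w : V) :
    ∫ v : V, rexp (-b * ‖v‖ ^ 2 + ⟪w, v⟫)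
      = (π / b) ^ (Module.finrank ℝ V / 2 : ℝ) * rexp (‖w‖ ^ 2 / (4 * b)) := by
  have h := GaussianFourier.integral_cexp_neg_mul_sq_norm_add (V := V)
    (b := (b : ℂ)) (by simpa using hb) 1 w
  rw [← Complex.ofReal_inj, ← integral_complex_ofReal]
  push_cast
  simp only [one_mul] at h
  rw [h, Complex.ofReal_cpow (by positivity)]
  push_cast
  ring_nf

end Gaussian

section ChangeOfVariables

variable {E F : Type*} [NormedAddCommGroup E] [NormedSpace ℝ E] [MeasurableSpace E] [BorelSpace E]
  [FiniteDimensional ℝ E] [NormedAddCommGroup F] [NormedSpace ℝ F]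
  (μ : Measure E) [μ.IsAddHaarMeasure]

theorem integral_comp_linearMap_of_det_ne_zero {f : E →ₗ[ℝ] E} (hf : LinearMap.det f ≠ 0)
    (g : E → F) : ∫ x, g (f x) ∂μ = |(LinearMap.det f)⁻¹| • ∫ x, g x ∂μ := by
  let e := (f.equivOfDetNeZero hf).toContinuousLinearEquiv.toHomeomorph
  change ∫ x, g (e x) ∂μ = _
  rw [← e.measurableEmbedding.integral_map, show ⇑e = f from rfl,
    Measure.map_linearMap_addHaar_eq_smul_addHaar μ hf, integral_smul_measure,
    ENNReal.toReal_ofReal (abs_nonneg _)]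

end ChangeOfVariables

namespace Matrix

variable {n : Type*} [Fintype n] [DecidableEq n]

theorem PosSemidef.sqrtOld_mul_self {A : Matrix n n ℝ} (hA : A.PosSemidef) :
    sqrtOld hA * sqrtOld hA = A := by
  have hU : (star hA.1.eigenvectorUnitary : Matrix n n ℝ) * hA.1.eigenvectorUnitary = 1 :=
    Unitary.coe_star_mul_self _
  have hD : diagonal (((↑) ∘ (√·) ∘ hA.1.eigenvalues) : n → ℝ) *
      diagonal ((↑) ∘ (√·) ∘ hA.1.eigenvalues)
      = diagonal (RCLike.ofReal ∘ hA.1.eigenvalues : n → ℝ) := by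
    rw [diagonal_mul_diagonal]; congr 1; funext i
    simp [Real.mul_self_sqrt (hA.eigenvalues_nonneg i)]
  unfold sqrtOld
  conv_rhs => rw [hA.1.spectral_theorem, Unitary.conjStarAlgAut_apply]
  rw [← hD]
  simp only [Matrix.mul_assoc]
  rw [← Matrix.mul_assoc (star _ : Matrix n n ℝ) _ (diagonal _ * _), hU, Matrix.one_mul]

theorem PosSemidef.isHermitian_sqrtOld {A : Matrix n n ℝ} (hA : A.PosSemidef) :
    (sqrtOld hA).IsHermitian := by
  simp [sqrtOld, IsHermitian, Matrix.mul_assoc, star_eq_conjTranspose]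

theorem PosDef.det_sqrtOld_ne_zero {A : Matrix n n ℝ} (hA : A.PosDef) :
    hA.posSemidef.sqrtOld.det ≠ 0 := fun h =>
  hA.det_pos.ne' (by rw [← hA.posSemidef.sqrtOld_mul_self, det_mul, h, zero_mul])

theorem toEuclideanLin_mul_apply (A B : Matrix n n ℝ) (x : EuclideanSpace ℝ n) :
    toEuclideanLin (A * B) x = toEuclideanLin A (toEuclideanLin B x) := by
  simp [toLpLin_mul_same]

theorem IsHermitian.norm_toEuclideanLin_sq {A : Matrix n n ℝ} (hA : A.IsHermitian)
    (x : EuclideanSpace ℝ n) :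
    ‖toEuclideanLin A x‖ ^ 2 = ⟪x, toEuclideanLin (A * A) x⟫ := by
  rw [← real_inner_self_eq_norm_sq, toEuclideanLin_mul_apply,
    isSymmetric_toEuclideanLin_iff.mpr hA]

theorem IsHermitian.inner_toEuclideanLin_mul_self_inv {Q : Matrix n n ℝ} (hQ : Q.IsHermitian)
    (hQdet : IsUnit Q.det) (w : EuclideanSpace ℝ n) :
    ⟪toEuclideanLin Q w, toEuclideanLin (Q * Q)⁻¹ (toEuclideanLin Q w)⟫ = ‖w‖ ^ 2 := by
  have hQQ : Q * (Q * Q)⁻¹ * Q = 1 := by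
    rw [mul_inv_rev, ← Matrix.mul_assoc, mul_nonsing_inv _ hQdet, Matrix.one_mul,
      nonsing_inv_mul _ hQdet]
  rw [isSymmetric_toEuclideanLin_iff.mpr hQ, ← toEuclideanLin_mul_apply,
    ← toEuclideanLin_mul_apply, hQQ, toLpLin_one, LinearMap.id_apply, real_inner_self_eq_norm_sq]

end Matrix

theorem inner_toEuclideanLin_self_le_matOpNorm {d : ℕ} (A : Matrix (Fin d) (Fin d) ℝ)
    (x : EuclideanSpace ℝ (Fin d)) : ⟪x, Matrix.toEuclideanLin A x⟫ ≤ matOpNorm A * ‖x‖ ^ 2 :=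
  calc ⟪x, Matrix.toEuclideanLin A x⟫ ≤ ‖x‖ * ‖Matrix.toEuclideanLin A x‖ := real_inner_le_norm _ _
    _ ≤ ‖x‖ * (matOpNorm A * ‖x‖) :=
      mul_le_mul_of_nonneg_left ((LinearMap.toContinuousLinearMap _).le_opNorm x) (norm_nonneg x)
    _ = matOpNorm A * ‖x‖ ^ 2 := by ring

theorem norm_toEuclideanLin_sqrtOld_sq_le {d : ℕ} {A : Matrix (Fin d) (Fin d) ℝ}
    (hA : A.PosSemidef) (x : EuclideanSpace ℝ (Fin d)) :
    ‖Matrix.toEuclideanLin hA.sqrtOld x‖ ^ 2 ≤ matOpNorm A * ‖x‖ ^ 2 := by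
  rw [hA.isHermitian_sqrtOld.norm_toEuclideanLin_sq, hA.sqrtOld_mul_self]
  exact inner_toEuclideanLin_self_le_matOpNorm A x

theorem abs_mul_sqrt_inv_pow_mul_self {a C : ℝ} (ha : a ≠ 0) (hC : 0 < C) (d : ℕ) :
    |a| * √(C ^ d * (a * a))⁻¹ = C ^ (-(d : ℝ) / 2) := by
  have hsqrt : √(C ^ d * (a * a)) = C ^ ((d : ℝ) / 2) * |a| := by
    rw [sqrt_mul (by positivity), sqrt_mul_self_eq_abs, sqrt_eq_rpow, ← rpow_natCast,
      ← rpow_mul hC.le, mul_one_div]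
  rw [sqrt_inv, hsqrt, mul_inv, mul_left_comm, mul_inv_cancel₀ (abs_ne_zero.mpr ha), mul_one,
    neg_div, rpow_neg hC.le]

theorem integral_gaussianMeasure_mul_self {d : ℕ} {F : Type*} [NormedAddCommGroup F]
    [NormedSpace ℝ F] (m : EuclideanSpace ℝ (Fin d)) {Q : Matrix (Fin d) (Fin d) ℝ}
    (hQ : Q.IsHermitian) (hQdet : Q.det ≠ 0) (f : EuclideanSpace ℝ (Fin d) → F) :
    ∫ x, f x ∂gaussianMeasure m (Q * Q)
      = (2 * π) ^ (-(d : ℝ) / 2) •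
          ∫ w, rexp (-‖w‖ ^ 2 / 2) • f (m + Matrix.toEuclideanLin Q w) := by
  set c := √((2 * π) ^ d * (Q * Q).det)⁻¹ with hc
  set ρ : EuclideanSpace ℝ (Fin d) → ℝ := fun x =>
    c * rexp (-⟪x - m, Matrix.toEuclideanLin (Q * Q)⁻¹ (x - m)⟫ / 2)
  have hρ_meas : Measurable fun x => ENNReal.ofReal (ρ x) := by
    have := (Matrix.toEuclideanLin (Q * Q)⁻¹).continuous_of_finiteDimensional
    fun_prop
  have hρ_shift (w : EuclideanSpace ℝ (Fin d)) :
      ρ (m + Matrix.toEuclideanLin Q w) = c * rexp (-‖w‖ ^ 2 / 2) := by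
    simp only [ρ, add_sub_cancel_left, hQ.inner_toEuclideanLin_mul_self_inv hQdet.isUnit]
  have hdet : LinearMap.det (Matrix.toEuclideanLin Q) = Q.det := LinearMap.det_toLpLin _ _
  have hconst : |Q.det| * c = (2 * π) ^ (-(d : ℝ) / 2) := by
    rw [hc, Matrix.det_mul]
    exact abs_mul_sqrt_inv_pow_mul_self hQdet (by positivity) d
  calc ∫ x, f x ∂gaussianMeasure m (Q * Q)
      = ∫ x, ρ x • f x := by
        rw [gaussianMeasure, integral_withDensity_eq_integral_toReal_smul hρ_meas
          (.of_forall fun _ => ENNReal.ofReal_lt_top)]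
        congr with x
        rw [ENNReal.toReal_ofReal (by positivity)]
    _ = ∫ z, ρ (m + z) • f (m + z) := (integral_add_left_eq_self (fun x => ρ x • f x) m).symm
    _ = |Q.det| • ∫ w, ρ (m + Matrix.toEuclideanLin Q w) • f (m + Matrix.toEuclideanLin Q w) := by
        have h := integral_comp_linearMap_of_det_ne_zero volume (hdet ▸ hQdet)
          fun z => ρ (m + z) • f (m + z)
        rw [h, hdet, smul_smul, abs_inv, mul_inv_cancel₀ (abs_ne_zero.mpr hQdet), one_smul]
    _ = _ := by
        simp_rw [hρ_shift, mul_smul]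
        rw [integral_smul, smul_smul, hconst]

theorem integral_exp_inner_add_mul_sq_norm_gaussianMeasure_le {d : ℕ}
    (m v : EuclideanSpace ℝ (Fin d)) {Q : Matrix (Fin d) (Fin d) ℝ} (hQ : Q.IsHermitian)
    (hQdet : Q.det ≠ 0) {a s : ℝ} (ha : 0 ≤ a)
    (hs : ∀ w, ‖Matrix.toEuclideanLin Q w‖ ^ 2 ≤ s * ‖w‖ ^ 2) (has : 2 * a * s < 1) :
    ∫ x, rexp (⟪x, v⟫ + a * ‖x - m‖ ^ 2) ∂gaussianMeasure m (Q * Q)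
      ≤ (1 - 2 * a * s) ^ (-(d : ℝ) / 2) *
          rexp (‖Matrix.toEuclideanLin Q v‖ ^ 2 / (2 * (1 - 2 * a * s)) + ⟪m, v⟫) := by
  set t := 1 - 2 * a * s
  have ht : 0 < t := sub_pos.mpr has
  have hb : 0 < t / 2 := by positivity
  have hpt (w : EuclideanSpace ℝ (Fin d)) :
      rexp (-‖w‖ ^ 2 / 2) • rexp (⟪m + Matrix.toEuclideanLin Q w, v⟫
        + a * ‖m + Matrix.toEuclideanLin Q w - m‖ ^ 2)
      ≤ rexp ⟪m, v⟫ * rexp (-(t / 2) * ‖w‖ ^ 2 + ⟪Matrix.toEuclideanLin Q v, w⟫) := by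
    rw [smul_eq_mul, ← exp_add, ← exp_add, exp_le_exp, add_sub_cancel_left, inner_add_left,
      Matrix.isSymmetric_toEuclideanLin_iff.mpr hQ, real_inner_comm w]
    nlinarith [mul_le_mul_of_nonneg_left (hs w) ha]
  have hconst : (2 * π) ^ (-(d : ℝ) / 2) * (π / (t / 2)) ^ ((d : ℝ) / 2) = t ^ (-(d : ℝ) / 2) := by
    have h2π : 0 < 2 * π := by positivity
    rw [show π / (t / 2) = 2 * π * t⁻¹ by field_simp, mul_rpow h2π.le (inv_nonneg.mpr ht.le),
      inv_rpow ht.le, neg_div, rpow_neg h2π.le, rpow_neg ht.le, inv_mul_cancel_left₀]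
    positivity
  rw [integral_gaussianMeasure_mul_self m hQ hQdet, smul_eq_mul]
  calc _ ≤ (2 * π) ^ (-(d : ℝ) / 2) * ∫ w, rexp ⟪m, v⟫ *
        rexp (-(t / 2) * ‖w‖ ^ 2 + ⟪Matrix.toEuclideanLin Q v, w⟫) := by
        refine mul_le_mul_of_nonneg_left ?_ (by positivity)
        exact integral_mono_of_nonneg (.of_forall fun w => by positivity)
          ((integrable_rexp_neg_mul_sq_norm_add_inner hb _).const_mul _) (.of_forall hpt)
    _ = ((2 * π) ^ (-(d : ℝ) / 2) * (π / (t / 2)) ^ ((d : ℝ) / 2)) *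
        (rexp (‖Matrix.toEuclideanLin Q v‖ ^ 2 / (4 * (t / 2))) * rexp ⟪m, v⟫) := by
        rw [integral_const_mul, integral_rexp_neg_mul_sq_norm_add_inner hb,
          finrank_euclideanSpace_fin]
        ring
    _ = _ := by
        rw [hconst, ← exp_add]
        ring_nf

theorem integral_exp_inner_add_mul_sq_norm_gaussianMeasure_smul_le {d : ℕ}
    (m v : EuclideanSpace ℝ (Fin d)) {B : Matrix (Fin d) (Fin d) ℝ} (hB : B.IsHermitian)
    (hBdet : B.det ≠ 0) {η a s : ℝ} (hη : 0 < η) (ha : 0 ≤ a)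
    (hs : ∀ w, ‖Matrix.toEuclideanLin B w‖ ^ 2 ≤ s * ‖w‖ ^ 2) (has : 2 * a * (η * s) < 1) :
    ∫ x, rexp (⟪x, v⟫ + a * ‖x - m‖ ^ 2) ∂gaussianMeasure m (η • (B * B))
      ≤ (1 - 2 * a * (η * s)) ^ (-(d : ℝ) / 2) *
          rexp (η * ‖Matrix.toEuclideanLin B v‖ ^ 2 / (2 * (1 - 2 * a * (η * s))) + ⟪m, v⟫) := by
  have hQ_norm (w : EuclideanSpace ℝ (Fin d)) :
      ‖Matrix.toEuclideanLin (√η • B) w‖ ^ 2 = η * ‖Matrix.toEuclideanLin B w‖ ^ 2 := by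
    simp [norm_smul, mul_pow, hη.le]
  have hQQ : √η • B * (√η • B) = η • (B * B) := by
    rw [smul_mul_smul, mul_self_sqrt hη.le]
  have hQdet : (√η • B).det ≠ 0 := by
    simp [hBdet, (sqrt_pos.mpr hη).ne']
  have h := integral_exp_inner_add_mul_sq_norm_gaussianMeasure_le m v (hB.smul (.all _)) hQdet
    ha (fun w => (hQ_norm w).trans_le (by nlinarith [hs w])) has
  rwa [hQQ, hQ_norm] at h

theorem one_sub_rpow_neg_le_exp {x a : ℝ} (hx0 : 0 ≤ x) (hx : x ≤ 1 / 2) (ha : 0 ≤ a) :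
    (1 - x) ^ (-a) ≤ rexp (2 * a * x) := by
  have hpos : 0 < 1 - x := by linarith
  have hlog : -log (1 - x) ≤ 2 * x :=
    calc -log (1 - x) = log (1 - x)⁻¹ := (log_inv _).symm
      _ ≤ (1 - x)⁻¹ - 1 := log_le_sub_one_of_pos (inv_pos.mpr hpos)
      _ = x / (1 - x) := by field_simp; ring
      _ ≤ 2 * x := by rw [div_le_iff₀ hpos]; nlinarith
  rw [rpow_def_of_pos hpos, exp_le_exp]
  nlinarith

theorem rpow_neg_mul_exp_le_exp {d : ℕ} {s k r c : ℝ} (hs0 : 0 ≤ s) (hs : s ≤ 1 / 6)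
    (hr : 0 ≤ r) (hk : k ≤ s * r) :
    (1 - 3 * s) ^ (-(d : ℝ) / 2) * rexp (k / (2 * (1 - 3 * s) * r) + c)
      ≤ rexp (c + (3 * d + 1) * s) := by
  have hrpow : (1 - 3 * s) ^ (-(d : ℝ) / 2) ≤ rexp (3 * d * s) := by
    rw [neg_div]
    convert one_sub_rpow_neg_le_exp (x := 3 * s) (by positivity) (by linarith)
      (by positivity : 0 ≤ (d : ℝ) / 2) using 2
    ring
  have hquot : k / (2 * (1 - 3 * s) * r) ≤ s :=
    div_le_of_le_mul₀ (by nlinarith) hs0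
      (by nlinarith [mul_nonneg (mul_nonneg hs0 hr) (by linarith : 0 ≤ 1 - 6 * s)])
  calc _ ≤ rexp (3 * d * s) * rexp (s + c) := by gcongr
    _ = _ := by rw [← exp_add]; ring_nf

theorem stmt18_general {d : ℕ} (μ : EuclideanSpace ℝ (Fin d))
    (Γ : Matrix (Fin d) (Fin d) ℝ) (hΓ : Γ.PosDef)
    (η : ℝ) (hη : 0 < η) (h6 : η * matOpNorm Γ ≤ 1 / 6) :
    (∫ x, Real.exp (⟪x, μ⟫ / ‖μ‖ + (3 / 2) * ‖x - μ‖ ^ 2) ∂(gaussianMeasure μ (η • Γ)))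
        ≤ (1 - 3 * η * matOpNorm Γ) ^ (-(d : ℝ) / 2) *
          Real.exp (η * ‖Matrix.toEuclideanLin (Matrix.PosSemidef.sqrtOld hΓ.posSemidef) μ‖ ^ 2 /
              (2 * (1 - 3 * η * matOpNorm Γ) * ‖μ‖ ^ 2) + ‖μ‖) ∧
      (1 - 3 * η * matOpNorm Γ) ^ (-(d : ℝ) / 2) *
          Real.exp (η * ‖Matrix.toEuclideanLin (Matrix.PosSemidef.sqrtOld hΓ.posSemidef) μ‖ ^ 2 /
              (2 * (1 - 3 * η * matOpNorm Γ) * ‖μ‖ ^ 2) + ‖μ‖)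
        ≤ Real.exp (‖μ‖ + (3 * d + 1) * η * matOpNorm Γ) := by
  set N := matOpNorm Γ
  set B := Matrix.PosSemidef.sqrtOld hΓ.posSemidef
  have hB_le := norm_toEuclideanLin_sqrtOld_sq_le hΓ.posSemidef
  have key := integral_exp_inner_add_mul_sq_norm_gaussianMeasure_smul_le μ (‖μ‖⁻¹ • μ)
    hΓ.posSemidef.isHermitian_sqrtOld hΓ.det_sqrtOld_ne_zero hη (a := 3 / 2) (by norm_num)
    hB_le (by linarith)
  have hμ_inner : ⟪μ, ‖μ‖⁻¹ • μ⟫ = ‖μ‖ := by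
    rw [real_inner_smul_right, real_inner_self_eq_norm_sq, sq, inv_mul_eq_div, mul_self_div_self]
  have hBv : η * ‖Matrix.toEuclideanLin B (‖μ‖⁻¹ • μ)‖ ^ 2 / (2 * (1 - 3 * (η * N)))
      = η * ‖Matrix.toEuclideanLin B μ‖ ^ 2 / (2 * (1 - 3 * (η * N)) * ‖μ‖ ^ 2) := by
    rw [map_smul, norm_smul, norm_inv, norm_norm]
    -- `ring` cannot see through the inverse of a sum; make the denominator an atom
    generalize 2 * (1 - 3 * (η * N)) = T
    ring
  rw [hΓ.posSemidef.sqrtOld_mul_self, show (2 : ℝ) * (3 / 2) = 3 by norm_num, hμ_inner, hBv] at key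
  simp_rw [real_inner_smul_right, inv_mul_eq_div] at key
  rw [mul_assoc 3 η N, mul_assoc _ η N]
  refine ⟨key, rpow_neg_mul_exp_le_exp (mul_nonneg hη.le (norm_nonneg _)) h6 (sq_nonneg _) ?_⟩
  rw [mul_assoc]
  exact mul_le_mul_of_nonneg_left (hB_le μ) hη.le

theorem stmt18 {d : ℕ} (μ : EuclideanSpace ℝ (Fin d)) (hμ : μ ≠ 0)
    (Γ : Matrix (Fin d) (Fin d) ℝ) (hΓsymm : Γ.IsSymm) (hΓ : Γ.PosDef)
    (η : ℝ) (hη : 0 < η) (h6 : η * matOpNorm Γ ≤ 1 / 6) :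
    (∫ x, Real.exp (⟪x, μ⟫ / ‖μ‖ + (3 / 2) * ‖x - μ‖ ^ 2) ∂(gaussianMeasure μ (η • Γ)))
        ≤ (1 - 3 * η * matOpNorm Γ) ^ (-(d : ℝ) / 2) *
          Real.exp (η * ‖Matrix.toEuclideanLin (Matrix.PosSemidef.sqrtOld hΓ.posSemidef) μ‖ ^ 2 /
              (2 * (1 - 3 * η * matOpNorm Γ) * ‖μ‖ ^ 2) + ‖μ‖) ∧
      (1 - 3 * η * matOpNorm Γ) ^ (-(d : ℝ) / 2) *
          Real.exp (η * ‖Matrix.toEuclideanLin (Matrix.PosSemidef.sqrtOld hΓ.posSemidef) μ‖ ^ 2 /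
              (2 * (1 - 3 * η * matOpNorm Γ) * ‖μ‖ ^ 2) + ‖μ‖)
        ≤ Real.exp (‖μ‖ + (3 * d + 1) * η * matOpNorm Γ) :=
  stmt18_general μ Γ hΓ η hη h6
end

section
/- Let λ' > 0 and let {η_k}_{k≥1} be a non-increasing sequence of positive real numbers with t_0 = 0 and t_n = ∑_{k=1}^{n} η_k. Then for every n ≥ 1 one has ∑_{k=1}^{n} η_k e^{−λ'(t_n − t_k)} ≤ e^{λ' η₁}/λ'. -/
theorem stmt19 (lam : ℝ) (hlam : 0 < lam) (η : ℕ → ℝ)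
    (hpos : ∀ n, 1 ≤ n → 0 < η n)
    (hmono : ∀ n, 1 ≤ n → η (n + 1) ≤ η n) :
    ∀ n, 1 ≤ n →
      ∑ k ∈ Finset.Icc 1 n, η k *
          Real.exp (-lam * ((∑ j ∈ Finset.Icc 1 n, η j) - ∑ j ∈ Finset.Icc 1 k, η j))
        ≤ Real.exp (lam * η 1) / lam := by
  intro n hn
  set T : ℕ → ℝ := fun k => ∑ j ∈ Finset.Icc 1 k, η j with hT
  set f : ℕ → ℝ := fun k => Real.exp (-lam * (T n - T k)) with hf
  set C : ℝ := Real.exp (lam * η 1) / lam with hC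
  have hC0 : 0 < C := div_pos (Real.exp_pos _) hlam
  have hle1 : ∀ k, 1 ≤ k → η k ≤ η 1 := by
    intro k hk
    induction k with
    | zero => omega
    | succ m ih =>
      rcases Nat.lt_or_ge m 1 with h | h
      · have : m = 0 := by omega
        subst this; exact le_refl _
      · exact le_trans (hmono m h) (ih h)
  have hstep : ∀ k, 1 ≤ k → T k = T (k - 1) + η k := by
    intro k hk
    obtain ⟨m, rfl⟩ := Nat.exists_eq_add_of_le hk
    simp only [hT, Nat.add_sub_cancel_left]
    rw [add_comm 1 m, Finset.sum_Icc_succ_top (by omega)]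
  -- per-term bound
  have hterm : ∀ k ∈ Finset.Icc 1 n, η k * f k ≤ C * (f k - f (k - 1)) := by
    intro k hk
    have hk1 : 1 ≤ k := (Finset.mem_Icc.mp hk).1
    have hηk : 0 < η k := hpos k hk1
    have hfk : 0 < f k := Real.exp_pos _
    have hfkm : f (k - 1) = f k * Real.exp (-lam * η k) := by
      rw [hf]
      simp only
      rw [← Real.exp_add]
      congr 1
      rw [hstep k hk1]
      ring
    have hscalar : lam * η k ≤ Real.exp (lam * η 1) * (1 - Real.exp (-lam * η k)) := by
      have h1 : lam * η k + 1 ≤ Real.exp (lam * η k) := Real.add_one_le_exp _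
      have h2 : Real.exp (lam * η k) ≤ Real.exp (lam * η 1) :=
        Real.exp_le_exp.mpr (by nlinarith [hle1 k hk1])
      have h3 : Real.exp (-lam * η k) ≤ 1 := by
        rw [← Real.exp_zero]
        exact Real.exp_le_exp.mpr (by nlinarith)
      have h4 : Real.exp (lam * η k) * (1 - Real.exp (-lam * η k))
          = Real.exp (lam * η k) - 1 := by
        have : Real.exp (lam * η k) * Real.exp (-lam * η k) = 1 := by
          rw [← Real.exp_add]; ring_nf; exact Real.exp_zero
        nlinarith
      nlinarith [Real.exp_pos (lam * η k)]
    have key : η k ≤ C * (1 - Real.exp (-lam * η k)) := by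
      rw [hC, div_mul_eq_mul_div, le_div_iff₀ hlam]
      nlinarith
    calc η k * f k ≤ (C * (1 - Real.exp (-lam * η k))) * f k :=
          mul_le_mul_of_nonneg_right key hfk.le
      _ = C * (f k - f (k - 1)) := by rw [hfkm]; ring
  have hsum := Finset.sum_le_sum hterm
  -- telescoping
  have htel : ∑ k ∈ Finset.Icc 1 n, (f k - f (k - 1)) = f n - f 0 := by
    rw [← Finset.Ico_add_one_right_eq_Icc, Finset.sum_Ico_eq_sum_range]
    have : ∀ i, 1 + i - 1 = i := fun i => by omega
    calc ∑ i ∈ Finset.range n, (f (1 + i) - f (1 + i - 1))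
        = ∑ i ∈ Finset.range n, (f (i + 1) - f i) := by
          apply Finset.sum_congr rfl
          intro i _
          rw [this i, add_comm 1 i]
      _ = f n - f 0 := Finset.sum_range_sub f n
  have hfn : f n = 1 := by simp [hf]
  have hf0 : 0 ≤ f 0 := (Real.exp_pos _).le
  calc ∑ k ∈ Finset.Icc 1 n, η k *
          Real.exp (-lam * ((∑ j ∈ Finset.Icc 1 n, η j) - ∑ j ∈ Finset.Icc 1 k, η j))
      = ∑ k ∈ Finset.Icc 1 n, η k * f k := rfl
    _ ≤ ∑ k ∈ Finset.Icc 1 n, C * (f k - f (k - 1)) := hsum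
    _ = C * (f n - f 0) := by rw [← Finset.mul_sum, htel]
    _ ≤ C := by nlinarith
end
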